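/- arXiv:1301.4646 — 14 statements merged into one kernel-verified Lean document; each statement's English description precedes it below -/
import Mathlib

section
/- Let N ≥ 2 be an integer, let S = {-(N-1)+2n : n = 0,1,…,N-1} ⊆ ℂ be the N-PAM signal set, let ΔS = {x - x' : x, x' ∈ S} be its difference constellation, and let H = {d/d' : d, d' ∈ ΔS, d ≠ 0, d' ≠ 0} be the set of singular fade states. Then the cardinality of H equals 2 + 4·∑_{n=2}^{N-1} φ(n), where φ denotes Euler's totient function (the sum being empty, hence 0, when N = 2). -/
open Finset

lemma pam_coprime_self' {m : ℕ} (hm : 2 ≤ m) : ¬ Nat.Coprime m m := by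
  intro h; rw [Nat.coprime_self] at h; omega

lemma pam_totient_filter_Icc {m : ℕ} (hm : 2 ≤ m) :
    ((Finset.Icc 1 m).filter (fun b => Nat.Coprime m b)).card = Nat.totient m := by
  rw [Nat.totient_eq_card_coprime]
  congr 1
  ext b
  simp only [mem_filter, mem_Icc, mem_range]
  constructor
  · rintro ⟨⟨hb1, hbm⟩, hc⟩
    refine ⟨lt_of_le_of_ne hbm ?_, hc⟩
    rintro rfl
    exact pam_coprime_self' hm hc
  · rintro ⟨hb, hc⟩
    refine ⟨⟨?_, hb.le⟩, hc⟩
    rcases Nat.eq_zero_or_pos b with rfl | h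
    · rw [Nat.coprime_zero_right] at hc; omega
    · exact h

lemma pam_coprime_pairs_card (n : ℕ) (hn : 1 ≤ n) :
    (((Finset.Icc 1 n) ×ˢ (Finset.Icc 1 n)).filter
      (fun p : ℕ × ℕ => Nat.Coprime p.1 p.2)).card
      = 1 + 2 * ∑ k ∈ Finset.Icc 2 n, Nat.totient k := by
  induction n with
  | zero => omega
  | succ n ih =>
    rcases Nat.eq_zero_or_pos n with rfl | hn1
    · decide
    have hn2 : 2 ≤ n + 1 := by omega
    set T : ℕ → Finset (ℕ × ℕ) := fun m =>
      ((Finset.Icc 1 m) ×ˢ (Finset.Icc 1 m)).filter (fun p : ℕ × ℕ => Nat.Coprime p.1 p.2)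
      with hT
    have hsub : T n ⊆ T (n+1) := by
      intro p hp
      simp only [hT, mem_filter, mem_product, mem_Icc] at hp ⊢
      exact ⟨⟨⟨hp.1.1.1, hp.1.1.2.trans (by omega)⟩, hp.1.2.1, hp.1.2.2.trans (by omega)⟩, hp.2⟩
    have hcard : (T (n+1)).card = (T n).card + ((T (n+1)) \ (T n)).card := by
      have := Finset.card_sdiff_add_card_eq_card hsub; omega
    have hA : (T (n+1)) \ (T n) =
        (((Finset.Icc 1 (n+1)).filter (fun b => Nat.Coprime (n+1) b)).image (fun b => ((n+1 : ℕ), b)))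
        ∪ (((Finset.Icc 1 (n+1)).filter (fun a => Nat.Coprime a (n+1))).image (fun a => (a, (n+1 : ℕ)))) := by
      ext ⟨p1, p2⟩
      simp only [hT, mem_sdiff, mem_filter, mem_product, mem_Icc, mem_union, mem_image,
        Prod.ext_iff]
      constructor
      · rintro ⟨⟨⟨⟨h11, h12⟩, h21, h22⟩, hc⟩, hnot⟩
        by_cases h1 : p1 = n + 1
        · exact Or.inl ⟨p2, ⟨⟨h21, h22⟩, h1 ▸ hc⟩, h1.symm, rfl⟩
        · have h2 : p2 = n + 1 := by
            by_contra h2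
            exact hnot ⟨⟨⟨h11, by omega⟩, h21, by omega⟩, hc⟩
          exact Or.inr ⟨p1, ⟨⟨h11, h12⟩, by rw [← h2]; exact hc⟩, rfl, h2.symm⟩
      · rintro (⟨b, ⟨⟨hb1, hb2⟩, hc⟩, rfl, rfl⟩ | ⟨a, ⟨⟨ha1, ha2⟩, hc⟩, rfl, rfl⟩)
        · refine ⟨⟨⟨⟨by omega, by omega⟩, by omega, by omega⟩, hc⟩, ?_⟩
          rintro ⟨⟨⟨_, hle⟩, _⟩, _⟩; omega
        · refine ⟨⟨⟨⟨by omega, by omega⟩, by omega, by omega⟩, hc⟩, ?_⟩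
          rintro ⟨⟨_, _, hle⟩, _⟩; omega
    have hdisj : Disjoint
        (((Finset.Icc 1 (n+1)).filter (fun b => Nat.Coprime (n+1) b)).image (fun b => ((n+1 : ℕ), b)))
        (((Finset.Icc 1 (n+1)).filter (fun a => Nat.Coprime a (n+1))).image (fun a => (a, (n+1 : ℕ)))) := by
      rw [Finset.disjoint_left]
      rintro p hp hq
      simp only [mem_image, mem_filter, mem_Icc, Prod.ext_iff] at hp hq
      obtain ⟨b, ⟨_, hcb⟩, h1, h2⟩ := hp
      obtain ⟨a, ⟨_, hca⟩, h1', h2'⟩ := hq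
      have : b = n + 1 := by omega
      subst this
      exact pam_coprime_self' hn2 (by simpa [← h1] using hcb)
    have hc1 : (((Finset.Icc 1 (n+1)).filter (fun b => Nat.Coprime (n+1) b)).image
        (fun b => ((n+1 : ℕ), b))).card = Nat.totient (n+1) := by
      rw [Finset.card_image_of_injective _ (fun a b h => by simpa using h)]
      exact pam_totient_filter_Icc hn2
    have hc2 : (((Finset.Icc 1 (n+1)).filter (fun a => Nat.Coprime a (n+1))).image
        (fun a => (a, (n+1 : ℕ)))).card = Nat.totient (n+1) := by
      rw [Finset.card_image_of_injective _ (fun a b h => by simpa using h)]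
      have heq : (Finset.Icc 1 (n+1)).filter (fun a => Nat.Coprime a (n+1))
          = (Finset.Icc 1 (n+1)).filter (fun b => Nat.Coprime (n+1) b) := by
        ext a; simp [Nat.coprime_comm]
      rw [heq]; exact pam_totient_filter_Icc hn2
    have : (T (n+1)).card = (T n).card + 2 * Nat.totient (n+1) := by
      rw [hcard, hA, Finset.card_union_of_disjoint hdisj, hc1, hc2]; ring
    rw [hT] at this
    rw [this, ih hn1, Finset.sum_Icc_succ_top hn2]
    ring

/-- For the `N`-PAM signal set `S = {-(N-1)+2n : n = 0,…,N-1} ⊆ ℂ` with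
difference constellation `ΔS = S - S` and singular fade states
`H = {d/d' : d, d' ∈ ΔS, d ≠ 0, d' ≠ 0}`, we have `|H| = 2 + 4·∑_{n=2}^{N-1} φ(n)`. -/
theorem pam_card_singular_fade_states (N : ℕ) (hN : 2 ≤ N)
    (S : Finset ℂ)
    (hS : S = (Finset.range N).image (fun n : ℕ => -((N : ℂ) - 1) + 2 * (n : ℂ)))
    (ΔS : Finset ℂ)
    (hΔS : ΔS = (S ×ˢ S).image (fun p : ℂ × ℂ => p.1 - p.2))
    (H : Finset ℂ)
    (hH : H = ((ΔS ×ˢ ΔS).filter (fun p : ℂ × ℂ => p.1 ≠ 0 ∧ p.2 ≠ 0)).image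
      (fun p : ℂ × ℂ => p.1 / p.2)) :
    H.card = 2 + 4 * ∑ n ∈ Finset.Icc 2 (N - 1), Nat.totient n := by
  -- Step 1: `ΔS` is the set of even integers `2k`, `|k| ≤ N-1`.
  have hΔ : ΔS = (Finset.Icc (-(N:ℤ)+1) ((N:ℤ)-1)).image (fun k : ℤ => 2 * (k : ℂ)) := by
    rw [hΔS, hS]
    ext z
    simp only [Finset.mem_image, Finset.mem_product, Finset.mem_range, Finset.mem_Icc,
      Prod.exists]
    constructor
    · rintro ⟨x, y, ⟨⟨n, hn, rfl⟩, ⟨m, hm, rfl⟩⟩, rfl⟩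
      refine ⟨(n : ℤ) - (m : ℤ), ⟨by omega, by omega⟩, ?_⟩
      push_cast
      ring
    · rintro ⟨k, ⟨hk1, hk2⟩, rfl⟩
      rcases le_or_gt 0 k with hk | hk
      · refine ⟨_, _, ⟨⟨k.toNat, by omega, rfl⟩, ⟨0, by omega, rfl⟩⟩, ?_⟩
        have : ((k.toNat : ℕ) : ℂ) = (k : ℂ) := by
          rw [← Int.cast_natCast]; congr 1; omega
        rw [this]
        push_cast
        ring
      · refine ⟨_, _, ⟨⟨0, by omega, rfl⟩, ⟨(-k).toNat, by omega, rfl⟩⟩, ?_⟩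
        have : (((-k).toNat : ℕ) : ℂ) = ((-k : ℤ) : ℂ) := by
          rw [← Int.cast_natCast]; congr 1; omega
        rw [this]
        push_cast
        ring
  -- Step 2: `H` as quotients of nonzero integers in the range.
  have hHZ : H = ((((Finset.Icc (-(N:ℤ)+1) ((N:ℤ)-1)).filter (· ≠ 0)) ×ˢ
          ((Finset.Icc (-(N:ℤ)+1) ((N:ℤ)-1)).filter (· ≠ 0))).image
      (fun p : ℤ × ℤ => (p.1 : ℂ) / (p.2 : ℂ))) := by
    rw [hH, hΔ]
    ext z
    simp only [Finset.mem_image, Finset.mem_filter, Finset.mem_product, Finset.mem_Icc,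
      Prod.exists]
    constructor
    · rintro ⟨x, y, ⟨⟨⟨k, hk, rfl⟩, ⟨l, hl, rfl⟩⟩, hx0, hy0⟩, rfl⟩
      have hk0 : (k : ℂ) ≠ 0 := fun h => hx0 (by rw [h]; ring)
      have hl0 : (l : ℂ) ≠ 0 := fun h => hy0 (by rw [h]; ring)
      refine ⟨k, l, ⟨⟨hk, by exact_mod_cast hk0⟩, hl, by exact_mod_cast hl0⟩, ?_⟩
      rw [mul_div_mul_left _ _ (two_ne_zero)]
    · rintro ⟨k, l, ⟨⟨hk, hk0⟩, hl, hl0⟩, rfl⟩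
      refine ⟨2 * (k : ℂ), 2 * (l : ℂ), ⟨⟨⟨k, hk, rfl⟩, ⟨l, hl, rfl⟩⟩, ?_, ?_⟩, ?_⟩
      · simp [hk0]
      · simp [hl0]
      · rw [mul_div_mul_left _ _ (two_ne_zero)]
  -- Step 3: `H` as the image of the reduced fractions `±a/b`, `1 ≤ a, b ≤ N-1`, coprime.
  have hHQ : H = ((((Finset.Icc 1 (N-1) ×ˢ Finset.Icc 1 (N-1)).filter
          (fun p : ℕ × ℕ => Nat.Coprime p.1 p.2)).image
          (fun p : ℕ × ℕ => (p.1 : ℚ) / (p.2 : ℚ))) ∪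
       (((Finset.Icc 1 (N-1) ×ˢ Finset.Icc 1 (N-1)).filter
          (fun p : ℕ × ℕ => Nat.Coprime p.1 p.2)).image
          (fun p : ℕ × ℕ => (p.1 : ℚ) / (p.2 : ℚ))).image (fun q : ℚ => -q)).image
      (fun q : ℚ => (q : ℂ)) := by
    rw [hHZ]
    ext z
    simp only [Finset.mem_image, Finset.mem_union, Finset.mem_filter, Finset.mem_product,
      Finset.mem_Icc, Prod.exists]
    constructor
    · rintro ⟨k, l, ⟨⟨hk, hk0⟩, hl, hl0⟩, rfl⟩
      set r : ℚ := (k : ℚ) / (l : ℚ) with hr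
      have hrz : ((r : ℂ)) = (k : ℂ) / (l : ℂ) := by push_cast [hr]; ring
      have hrdiv : r = Rat.divInt k l := (Rat.divInt_eq_div k l).symm
      have hnum : r.num ∣ k := hrdiv ▸ Rat.num_dvd k hl0
      have hden : (r.den : ℤ) ∣ l := hrdiv ▸ Rat.den_dvd k l
      have hr0 : r ≠ 0 := by
        rw [hr]
        exact div_ne_zero (Int.cast_ne_zero.mpr hk0) (Int.cast_ne_zero.mpr hl0)
      have hnum0 : r.num ≠ 0 := Rat.num_ne_zero.mpr hr0
      have hnumle : r.num.natAbs ≤ N - 1 := by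
        have h1 : r.num.natAbs ≤ k.natAbs :=
          Nat.le_of_dvd (by omega) (Int.natAbs_dvd_natAbs.mpr hnum)
        omega
      have hdenle : r.den ≤ N - 1 := by
        have h1 : r.den ≤ l.natAbs :=
          Nat.le_of_dvd (by omega) (Int.natAbs_dvd_natAbs.mpr (by simpa using hden))
        omega
      have hcop : Nat.Coprime r.num.natAbs r.den := r.reduced
      have hmem : (1 ≤ r.num.natAbs ∧ r.num.natAbs ≤ N - 1) ∧ 1 ≤ r.den ∧ r.den ≤ N - 1 :=
        ⟨⟨by omega, hnumle⟩, r.den_pos, hdenle⟩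
      rcases lt_or_gt_of_ne hnum0 with hneg | hpos
      · refine ⟨r, Or.inr ⟨-r, ⟨r.num.natAbs, r.den, ⟨hmem, hcop⟩, ?_⟩, neg_neg r⟩, hrz⟩
        have h1 : ((r.num.natAbs : ℤ) : ℚ) = ((-r.num : ℤ) : ℚ) := by
          congr 1; omega
        calc (r.num.natAbs : ℚ) / (r.den : ℚ)
              = ((r.num.natAbs : ℤ) : ℚ) / (r.den : ℚ) := by rw [Int.cast_natCast]
          _ = ((-r.num : ℤ) : ℚ) / (r.den : ℚ) := by rw [h1]
          _ = -((r.num : ℚ) / (r.den : ℚ)) := by push_cast; ring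
          _ = -r := by rw [Rat.num_div_den r]
      · refine ⟨r, Or.inl ⟨r.num.natAbs, r.den, ⟨hmem, hcop⟩, ?_⟩, hrz⟩
        have h1 : ((r.num.natAbs : ℤ) : ℚ) = (r.num : ℚ) := by
          congr 1; omega
        calc (r.num.natAbs : ℚ) / (r.den : ℚ)
              = ((r.num.natAbs : ℤ) : ℚ) / (r.den : ℚ) := by rw [Int.cast_natCast]
          _ = (r.num : ℚ) / (r.den : ℚ) := by rw [h1]
          _ = r := Rat.num_div_den r
    · rintro ⟨q, hq | ⟨q', ⟨a, b, ⟨⟨⟨ha1, ha2⟩, hb1, hb2⟩, hcop⟩, rfl⟩, rfl⟩, rfl⟩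
      · obtain ⟨a, b, ⟨⟨⟨ha1, ha2⟩, hb1, hb2⟩, hcop⟩, rfl⟩ := hq
        refine ⟨(a : ℤ), (b : ℤ), ⟨⟨by omega, by omega⟩, by omega, by omega⟩, ?_⟩
        push_cast
        ring
      · refine ⟨-(a : ℤ), (b : ℤ), ⟨⟨by omega, by omega⟩, by omega, by omega⟩, ?_⟩
        push_cast
        ring
  -- Step 4: count.
  rw [hHQ]
  set T := (Finset.Icc 1 (N-1) ×ˢ Finset.Icc 1 (N-1)).filter
          (fun p : ℕ × ℕ => Nat.Coprime p.1 p.2) with hT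
  set P := T.image (fun p : ℕ × ℕ => (p.1 : ℚ) / (p.2 : ℚ)) with hP
  have hpos : ∀ q ∈ P, 0 < q := by
    intro q hq
    rw [hP] at hq
    simp only [mem_image, hT, mem_filter, mem_product, mem_Icc, Prod.exists] at hq
    obtain ⟨a, b, ⟨⟨⟨ha1, _⟩, hb1, _⟩, _⟩, rfl⟩ := hq
    positivity
  rw [Finset.card_image_of_injective _ (Rat.cast_injective)]
  have hdisj : Disjoint P (P.image (fun q : ℚ => -q)) := by
    rw [Finset.disjoint_left]
    intro q hq hq'
    simp only [mem_image] at hq'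
    obtain ⟨q', hq', rfl⟩ := hq'
    have h1 := hpos _ hq
    have h2 := hpos _ hq'
    linarith
  rw [Finset.card_union_of_disjoint hdisj,
    Finset.card_image_of_injective _ neg_injective]
  have hinj : (T.image (fun p : ℕ × ℕ => (p.1 : ℚ) / (p.2 : ℚ))).card = T.card := by
    apply Finset.card_image_of_injOn
    intro p hp q hq hpq
    rw [hT, Finset.mem_coe, mem_filter, mem_product, mem_Icc, mem_Icc] at hp hq
    obtain ⟨⟨⟨hp1, _⟩, hp2, _⟩, hpc⟩ := hp
    obtain ⟨⟨⟨hq1, _⟩, hq2, _⟩, hqc⟩ := hq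
    have e1 : ((p.1 : ℤ) : ℚ) / ((p.2 : ℤ) : ℚ) = ((q.1 : ℤ) : ℚ) / ((q.2 : ℤ) : ℚ) := by
      push_cast
      exact_mod_cast hpq
    have hnp : (((p.1 : ℤ) : ℚ) / ((p.2 : ℤ) : ℚ)).num = (p.1 : ℤ) :=
      Rat.num_div_eq_of_coprime (by exact_mod_cast hp2) (by simpa using hpc)
    have hnq : (((q.1 : ℤ) : ℚ) / ((q.2 : ℤ) : ℚ)).num = (q.1 : ℤ) :=
      Rat.num_div_eq_of_coprime (by exact_mod_cast hq2) (by simpa using hqc)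
    have hdp : ((((p.1 : ℤ) : ℚ) / ((p.2 : ℤ) : ℚ)).den : ℤ) = (p.2 : ℤ) :=
      Rat.den_div_eq_of_coprime (by exact_mod_cast hp2) (by simpa using hpc)
    have hdq : ((((q.1 : ℤ) : ℚ) / ((q.2 : ℤ) : ℚ)).den : ℤ) = (q.2 : ℤ) :=
      Rat.den_div_eq_of_coprime (by exact_mod_cast hq2) (by simpa using hqc)
    have : p.1 = q.1 := by rw [e1] at hnp; omega
    have : p.2 = q.2 := by rw [e1] at hdp; omega
    exact Prod.ext ‹p.1 = q.1› ‹p.2 = q.2›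
  rw [hP, hinj, pam_coprime_pairs_card (N-1) (by omega)]
  ring
end

section
/- Let M = 2^(2λ) with λ ≥ 1, let S = {a + b·i : a, b ∈ {-(√M-1)+2n : n = 0,…,√M-1}} ⊆ ℂ be the square M-QAM signal set, ΔS = {x - x' : x, x' ∈ S} its difference constellation, and H = {d/d' : d, d' ∈ ΔS, d ≠ 0, d' ≠ 0} its set of singular fade states. Let D⁺ = {d/2 : d ∈ ΔS, Re(d) > 0, Im(d) ≥ 0}, a finite set of Gaussian integers. Then |H| = 4 + 8·k, where k is the number of 2-element subsets {α, β} of D⁺ such that α and β are coprime in the ring ℤ[i] of Gaussian integers. -/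
/-! Every element of `ΔS` is `2 z` with `z` in the box `|Re z|, |Im z| ≤ N = 2^λ - 1`, so the
fade states are the quotients `a / b` of nonzero box points. Dividing out `gcd(a, b)` and rotating
numerator and denominator into the first quadrant by units writes such a quotient as `u γ / δ`
with `u ∈ {±1, ±i}` and `γ, δ` coprime elements of `D⁺`, the first-quadrant part of the box
(which is closed under taking divisors). This representation is unique because every nonzero
Gaussian integer has exactly one first-quadrant associate. Hence
`|H| = 4 · #{(γ, δ) ∈ D⁺ × D⁺ coprime}`; the only coprime diagonal pair is `(1, 1)`, and the
off-diagonal coprime pairs come two per coprime 2-subset. -/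

open Finset

local notation "ℤ[i]" => GaussianInt

theorem IsCoprime.associated_of_associated_mul {R : Type*} [CommRing R] [IsDomain R]
    {a b c d : R} (hab : IsCoprime a b) (hcd : IsCoprime c d) (h : Associated (a * d) (c * b)) :
    Associated a c :=
  associated_of_dvd_dvd (hab.dvd_of_dvd_mul_right ((dvd_mul_right a d).trans h.dvd))
    (hcd.dvd_of_dvd_mul_right ((dvd_mul_right c b).trans h.symm.dvd))

theorem exists_lt_sub_eq_iff {n : ℕ} {d : ℤ} :
    (∃ a < n, ∃ b < n, (a : ℤ) - b = d) ↔ |d| ≤ n - 1 := by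
  rw [abs_le]
  constructor
  · rintro ⟨a, ha, b, hb, rfl⟩
    omega
  · intro h
    rcases le_total 0 d with hd | hd
    · exact ⟨d.toNat, by omega, 0, by omega, by omega⟩
    · exact ⟨0, by omega, (-d).toNat, by omega, by omega⟩

theorem card_filter_offDiag_eq_two_mul {α : Type*} [DecidableEq α] (s : Finset α)
    {r : α → α → Prop} [DecidableRel r] (hr : ∀ ⦃a b⦄, r a b → r b a)
    [DecidablePred fun t : Finset α => ∃ a ∈ t, ∃ b ∈ t, a ≠ b ∧ r a b] :
    #(s.offDiag.filter fun p => r p.1 p.2) =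
      2 * #((s.powersetCard 2).filter fun t => ∃ a ∈ t, ∃ b ∈ t, a ≠ b ∧ r a b) := by
  rw [card_eq_sum_card_fiberwise (f := fun p => ({p.1, p.2} : Finset α)), sum_const_nat, mul_comm]
  · intro t ht
    simp only [mem_filter, mem_powersetCard] at ht
    obtain ⟨⟨hts, ht2⟩, a, ha, b, hb, hab, hrab⟩ := ht
    suffices h : {p ∈ s.offDiag | r p.1 p.2 ∧ {p.1, p.2} = t} = t.offDiag by
      rw [filter_filter, h, offDiag_card, ht2]
    ext ⟨x, y⟩
    simp only [mem_filter, mem_offDiag]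
    constructor
    · rintro ⟨⟨-, -, hxy⟩, -, rfl⟩
      simp [hxy]
    · rintro ⟨hx, hy, hxy⟩
      have hpair : {x, y} = t :=
        eq_of_subset_of_card_le (insert_subset hx (singleton_subset_iff.mpr hy))
          (by rw [ht2, card_pair hxy])
      refine ⟨⟨hts hx, hts hy, hxy⟩, ?_, hpair⟩
      rw [← hpair] at ha hb
      simp only [mem_insert, mem_singleton] at ha hb
      rcases ha with rfl | rfl <;> rcases hb with rfl | rfl <;>
        first | exact absurd rfl hab | exact hrab | exact hr hrab
  · rintro ⟨a, b⟩ h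
    simp only [mem_coe, mem_filter, mem_offDiag] at h
    obtain ⟨⟨ha, hb, hab⟩, hr⟩ := h
    simp only [mem_coe, mem_filter, mem_powersetCard]
    exact ⟨⟨insert_subset ha (singleton_subset_iff.mpr hb), card_pair hab⟩,
      a, by simp, b, by simp, hab, hr⟩

namespace GaussianInt

open Zsqrtd

def unitsFinset : Finset ℤ[i] := {1, -1, sqrtd, -sqrtd}

theorem card_unitsFinset : unitsFinset.card = 4 := by decide

theorem isUnit_iff_mem_unitsFinset {u : ℤ[i]} : IsUnit u ↔ u ∈ unitsFinset := by
  constructor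
  · intro hu
    have hnorm : u.re * u.re + u.im * u.im = 1 := by
      simpa [norm_def] using (norm_eq_one_iff' (by norm_num) u).mpr hu
    have hre : u.re ∈ Icc (-1 : ℤ) 1 := mem_Icc.mpr ⟨by nlinarith, by nlinarith⟩
    have him : u.im ∈ Icc (-1 : ℤ) 1 := mem_Icc.mpr ⟨by nlinarith, by nlinarith⟩
    obtain ⟨a, b⟩ := u
    simp only [unitsFinset, mem_insert, mem_singleton, Zsqrtd.ext_iff]
    fin_cases hre <;> fin_cases him <;> simp_all
  · intro hu
    rw [← norm_eq_one_iff' (by norm_num)]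
    simp only [unitsFinset, mem_insert, mem_singleton] at hu
    rcases hu with rfl | rfl | rfl | rfl <;> decide

def IsFirstQuadrant (z : ℤ[i]) : Prop := 0 < z.re ∧ 0 ≤ z.im

theorem IsFirstQuadrant.ne_zero {z : ℤ[i]} (hz : IsFirstQuadrant z) : z ≠ 0 := by
  rintro rfl
  exact hz.1.ne rfl

theorem exists_isUnit_isFirstQuadrant_mul {z : ℤ[i]} (hz : z ≠ 0) :
    ∃ u, IsUnit u ∧ IsFirstQuadrant (u * z) := by
  have hz' : z.re ≠ 0 ∨ z.im ≠ 0 := by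
    by_contra! h
    exact hz (Zsqrtd.ext h.1 h.2)
  simp only [isUnit_iff_mem_unitsFinset, unitsFinset, mem_insert, mem_singleton,
    exists_eq_or_imp, exists_eq_left, IsFirstQuadrant, re_mul, im_mul, re_one, im_one, re_neg,
    im_neg, re_sqrtd, im_sqrtd, Int.reduceNeg, one_mul, zero_mul, add_zero, zero_add, neg_mul,
    neg_neg, neg_zero, Int.neg_pos, Int.neg_nonneg]
  omega

theorem IsFirstQuadrant.eq_one_of_isUnit {z u : ℤ[i]} (hz : IsFirstQuadrant z) (hu : IsUnit u)
    (huz : IsFirstQuadrant (u * z)) : u = 1 := by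
  rw [isUnit_iff_mem_unitsFinset] at hu
  simp only [unitsFinset, mem_insert, mem_singleton] at hu
  obtain ⟨hre, him⟩ := hz
  rcases hu with rfl | rfl | rfl | rfl <;> simp [IsFirstQuadrant] at huz ⊢ <;> omega

theorem IsFirstQuadrant.eq_of_associated {z w : ℤ[i]} (hz : IsFirstQuadrant z)
    (hw : IsFirstQuadrant w) (h : Associated z w) : z = w := by
  obtain ⟨u, rfl⟩ := h
  rw [mul_comm] at hw
  rw [hz.eq_one_of_isUnit u.isUnit hw, mul_one]

theorem IsFirstQuadrant.isCoprime_self_iff {z : ℤ[i]} (hz : IsFirstQuadrant z) :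
    IsCoprime z z ↔ z = 1 := by
  refine ⟨fun h => ?_, fun h => h ▸ isCoprime_one_left⟩
  have h1 : IsFirstQuadrant 1 := ⟨one_pos, le_rfl⟩
  exact h1.eq_one_of_isUnit (isCoprime_self.mp h) (by rwa [mul_one])

def InBox (N : ℤ) (z : ℤ[i]) : Prop := |z.re| ≤ N ∧ |z.im| ≤ N

theorem InBox.isUnit_mul {N : ℤ} {z u : ℤ[i]} (hz : InBox N z) (hu : IsUnit u) :
    InBox N (u * z) := by
  rw [isUnit_iff_mem_unitsFinset] at hu
  simp only [unitsFinset, mem_insert, mem_singleton] at hu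
  obtain ⟨hre, him⟩ := hz
  rcases hu with rfl | rfl | rfl | rfl <;> simp [InBox, hre, him]

theorem two_le_norm_of_not_isUnit {t : ℤ[i]} (ht0 : t ≠ 0) (ht : ¬IsUnit t) : 2 ≤ t.norm := by
  have h0 : 0 < t.norm := norm_pos.mpr ht0
  have h1 : t.norm ≠ 1 := fun h => ht ((norm_eq_one_iff' (by norm_num) t).mp h)
  omega

theorem InBox.of_dvd {N : ℤ} {a γ : ℤ[i]} (ha : InBox N a) (ha0 : a ≠ 0) (hγ : γ ∣ a) :
    InBox N γ := by
  obtain ⟨t, rfl⟩ := hγ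
  by_cases ht : IsUnit t
  · have := ha.isUnit_mul ht.unit⁻¹.isUnit
    rwa [mul_comm γ, ← mul_assoc, ht.val_inv_mul, one_mul] at this
  · -- a proper divisor has at most half the norm, and the box has squared radius at most 2 N²
    have ht2 := two_le_norm_of_not_isUnit (right_ne_zero_of_mul ha0) ht
    have hγ0 := norm_nonneg γ
    have hN : 0 ≤ N := (abs_nonneg _).trans ha.1
    have hnorm : (γ * t).norm ≤ 2 * N ^ 2 := by
      have := sq_le_sq' (abs_le.mp ha.1).1 (abs_le.mp ha.1).2
      have := sq_le_sq' (abs_le.mp ha.2).1 (abs_le.mp ha.2).2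
      simp only [norm_def]
      nlinarith
    rw [norm_mul] at hnorm
    have hγN : γ.norm ≤ N ^ 2 := by nlinarith
    simp only [norm_def] at hγN
    exact ⟨abs_le_of_sq_le_sq (by nlinarith [mul_self_nonneg γ.im]) hN,
      abs_le_of_sq_le_sq (by nlinarith [mul_self_nonneg γ.re]) hN⟩

theorem toComplex_div_eq_div_iff {a b c d : ℤ[i]} (hb : b ≠ 0) (hd : d ≠ 0) :
    (a : ℂ) / b = c / d ↔ a * d = c * b := by
  rw [div_eq_div_iff (toComplex_eq_zero.not.mpr hb) (toComplex_eq_zero.not.mpr hd),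
    ← toComplex_mul, ← toComplex_mul, toComplex_inj]

theorem exists_inBox_div_eq_iff {N : ℤ} {h : ℂ} :
    (∃ a b : ℤ[i], InBox N a ∧ InBox N b ∧ a ≠ 0 ∧ b ≠ 0 ∧ (a : ℂ) / b = h) ↔
      ∃ u γ δ : ℤ[i], IsUnit u ∧ (InBox N γ ∧ IsFirstQuadrant γ) ∧
        (InBox N δ ∧ IsFirstQuadrant δ) ∧ IsCoprime γ δ ∧ ((u * γ : ℤ[i]) : ℂ) / δ = h := by
  constructor
  · rintro ⟨a, b, ha, hb, ha0, hb0, rfl⟩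
    obtain ⟨a', b', c, hrel, rfl, rfl⟩ :=
      UniqueFactorizationMonoid.exists_reduced_factors' a b hb0
    obtain ⟨v, hv, hva⟩ := exists_isUnit_isFirstQuadrant_mul (right_ne_zero_of_mul ha0)
    obtain ⟨w, hw, hwb⟩ := exists_isUnit_isFirstQuadrant_mul (right_ne_zero_of_mul hb0)
    refine ⟨hv.unit⁻¹ * w, v * a', w * b', (Units.isUnit _).mul hw,
      ⟨ha.of_dvd ha0 (hv.mul_left_dvd.mpr (dvd_mul_left _ _)), hva⟩,
      ⟨hb.of_dvd hb0 (hw.mul_left_dvd.mpr (dvd_mul_left _ _)), hwb⟩, ?_, ?_⟩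
    · rw [isCoprime_mul_unit_left_left hv, isCoprime_mul_unit_left_right hw]
      exact hrel.isCoprime
    · rw [toComplex_div_eq_div_iff hwb.ne_zero hb0]
      linear_combination (c * a' * w * b') * hv.val_inv_mul
  · rintro ⟨u, γ, δ, hu, ⟨hγ, hγQ⟩, ⟨hδ, hδQ⟩, -, rfl⟩
    exact ⟨u * γ, δ, hγ.isUnit_mul hu, hδ, mul_ne_zero hu.ne_zero hγQ.ne_zero, hδQ.ne_zero, rfl⟩

theorem injOn_unit_mul_div :
    Set.InjOn (fun q : ℤ[i] × ℤ[i] × ℤ[i] => ((q.1 * q.2.1 : ℤ[i]) : ℂ) / q.2.2)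
      {q | IsUnit q.1 ∧ IsFirstQuadrant q.2.1 ∧ IsFirstQuadrant q.2.2 ∧ IsCoprime q.2.1 q.2.2} := by
  rintro ⟨u, γ, δ⟩ ⟨hu, hγ, hδ, hc⟩ ⟨u', γ', δ'⟩ ⟨hu', hγ', hδ', hc'⟩ h
  dsimp only at h
  rw [toComplex_div_eq_div_iff hδ.ne_zero hδ'.ne_zero, mul_assoc, mul_assoc] at h
  have hassoc : Associated (γ * δ') (γ' * δ) :=
    (associated_unit_mul_left _ _ hu).symm.trans (h ▸ associated_unit_mul_left _ _ hu')
  have hγγ' := hγ.eq_of_associated hγ' (hc.associated_of_associated_mul hc' hassoc)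
  have hδδ' := hδ.eq_of_associated hδ' (hc.symm.associated_of_associated_mul hc'.symm
    (by rw [mul_comm δ, mul_comm δ']; exact hassoc.symm))
  subst hγγ' hδδ'
  rw [mul_right_cancel₀ (mul_ne_zero hγ.ne_zero hδ.ne_zero) h]

open scoped Classical in
theorem card_filter_isCoprime_product {s : Finset ℤ[i]} (hs : ∀ z ∈ s, IsFirstQuadrant z)
    (h1 : 1 ∈ s) :
    #((s ×ˢ s).filter fun p => IsCoprime p.1 p.2) =
      #(s.offDiag.filter fun p => IsCoprime p.1 p.2) + 1 := by
  rw [← diag_union_offDiag, filter_union,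
    card_union_of_disjoint (disjoint_filter_filter (disjoint_diag_offDiag s)), add_comm]
  congr
  rw [card_eq_one]
  refine ⟨(1, 1), ?_⟩
  ext ⟨a, b⟩
  simp only [mem_filter, mem_diag, mem_singleton, Prod.mk.injEq]
  constructor
  · rintro ⟨⟨ha, rfl⟩, hc⟩
    have := (hs a ha).isCoprime_self_iff.mp hc
    exact ⟨this, this⟩
  · rintro ⟨rfl, rfl⟩
    exact ⟨⟨h1, rfl⟩, isCoprime_one_left⟩

section DoubledBox

variable {N : ℤ} {Δ : Finset ℂ}

theorem exists_mem_half_eq_iff (hΔ : ∀ d, d ∈ Δ ↔ ∃ z : ℤ[i], InBox N z ∧ d = 2 * z)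
    (g : ℤ[i]) :
    (∃ d ∈ Δ, 0 < d.re ∧ 0 ≤ d.im ∧ (g : ℂ) = d / 2) ↔ InBox N g ∧ IsFirstQuadrant g := by
  have hre : 0 < (2 * (g : ℂ)).re ↔ 0 < g.re := by
    rw [Complex.mul_re, Complex.re_ofNat, Complex.im_ofNat, zero_mul, sub_zero, ← intCast_re,
      mul_pos_iff_of_pos_left two_pos, Int.cast_pos]
  have him : 0 ≤ (2 * (g : ℂ)).im ↔ 0 ≤ g.im := by
    rw [Complex.mul_im, Complex.re_ofNat, Complex.im_ofNat, zero_mul, add_zero, ← intCast_im,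
      mul_nonneg_iff_of_pos_left two_pos, Int.cast_nonneg_iff]
  simp only [hΔ]
  constructor
  · rintro ⟨_, ⟨z, hz, rfl⟩, hzre, hzim, hg⟩
    rw [mul_div_cancel_left₀ _ two_ne_zero, toComplex_inj] at hg
    subst hg
    exact ⟨hz, hre.mp hzre, him.mp hzim⟩
  · rintro ⟨hg, hgre, hgim⟩
    exact ⟨2 * g, ⟨g, hg, rfl⟩, hre.mpr hgre, him.mpr hgim, by ring⟩

theorem exists_mem_div_eq_iff (hΔ : ∀ d, d ∈ Δ ↔ ∃ z : ℤ[i], InBox N z ∧ d = 2 * z) (h : ℂ) :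
    (∃ p ∈ (Δ ×ˢ Δ).filter (fun p => p.1 ≠ 0 ∧ p.2 ≠ 0), p.1 / p.2 = h) ↔
      ∃ a b : ℤ[i], InBox N a ∧ InBox N b ∧ a ≠ 0 ∧ b ≠ 0 ∧ (a : ℂ) / b = h := by
  simp only [mem_filter, mem_product, hΔ, Prod.exists]
  constructor
  · rintro ⟨_, _, ⟨⟨⟨a, ha, rfl⟩, ⟨b, hb, rfl⟩⟩, ha0, hb0⟩, rfl⟩
    refine ⟨a, b, ha, hb, ?_, ?_, (mul_div_mul_left (a : ℂ) b two_ne_zero).symm⟩ <;> simp_all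
  · rintro ⟨a, b, ha, hb, ha0, hb0, rfl⟩
    exact ⟨2 * a, 2 * b, ⟨⟨⟨a, ha, rfl⟩, ⟨b, hb, rfl⟩⟩, by simpa, by simpa⟩,
      mul_div_mul_left (a : ℂ) b two_ne_zero⟩

end DoubledBox

end GaussianInt

open GaussianInt

noncomputable def qamSignalSet (n : ℕ) : Finset ℂ :=
  (range n ×ˢ range n).image fun p => (2 * p.1 - (n - 1) : ℂ) + (2 * p.2 - (n - 1)) * Complex.I

theorem mem_differences_qamSignalSet_iff {n : ℕ} {d : ℂ} :
    d ∈ (qamSignalSet n ×ˢ qamSignalSet n).image (fun p => p.1 - p.2) ↔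
      ∃ z : ℤ[i], InBox (n - 1) z ∧ d = 2 * z := by
  simp only [qamSignalSet, mem_image, mem_product, mem_range, Prod.exists]
  constructor
  · rintro ⟨_, _, ⟨⟨a, b, ⟨ha, hb⟩, rfl⟩, ⟨a', b', ⟨ha', hb'⟩, rfl⟩⟩, rfl⟩
    refine ⟨⟨a - a', b - b'⟩, ⟨exists_lt_sub_eq_iff.mp ⟨a, ha, a', ha', rfl⟩,
      exists_lt_sub_eq_iff.mp ⟨b, hb, b', hb', rfl⟩⟩, ?_⟩
    rw [toComplex_def']
    push_cast
    ring
  · rintro ⟨z, ⟨hre, him⟩, rfl⟩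
    obtain ⟨a, ha, a', ha', hre⟩ := exists_lt_sub_eq_iff.mpr hre
    obtain ⟨b, hb, b', hb', him⟩ := exists_lt_sub_eq_iff.mpr him
    refine ⟨_, _, ⟨⟨a, b, ⟨ha, hb⟩, rfl⟩, ⟨a', b', ⟨ha', hb'⟩, rfl⟩⟩, ?_⟩
    rw [toComplex_def, ← hre, ← him]
    push_cast
    ring

open scoped Classical in
/-- For the square `M`-QAM signal set (`M = 2^(2λ)`, `√M = 2^λ`) with
difference constellation `ΔS` and singular fade states `H = {d/d' : d,d' ∈ ΔS \ {0}}`,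
letting `D⁺ = {d/2 : d ∈ ΔS, Re d > 0, Im d ≥ 0} ⊆ ℤ[i]`, we have `|H| = 4 + 8k`, where
`k` is the number of 2-element subsets `{α, β}` of `D⁺` with `α, β` coprime in `ℤ[i]`. -/
theorem qam_card_singular_fade_states (l : ℕ) (hl : 1 ≤ l)
    (S : Finset ℂ)
    (hS : S = ((Finset.range (2 ^ l)) ×ˢ (Finset.range (2 ^ l))).image
      (fun p : ℕ × ℕ =>
        (2 * (p.1 : ℂ) - ((2 : ℂ) ^ l - 1)) + (2 * (p.2 : ℂ) - ((2 : ℂ) ^ l - 1)) * Complex.I))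
    (ΔS : Finset ℂ)
    (hΔS : ΔS = (S ×ˢ S).image (fun p : ℂ × ℂ => p.1 - p.2))
    (H : Finset ℂ)
    (hH : H = ((ΔS ×ˢ ΔS).filter (fun p : ℂ × ℂ => p.1 ≠ 0 ∧ p.2 ≠ 0)).image
      (fun p : ℂ × ℂ => p.1 / p.2))
    (Dplus : Finset GaussianInt)
    (hD : ∀ g : GaussianInt, g ∈ Dplus ↔
      (∃ d ∈ ΔS, 0 < d.re ∧ 0 ≤ d.im ∧ GaussianInt.toComplex g = d / 2))
    (k : ℕ)
    (hk : k = ((Dplus.powersetCard 2).filter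
      (fun t : Finset GaussianInt => ∃ α ∈ t, ∃ β ∈ t, α ≠ β ∧ IsCoprime α β)).card) :
    H.card = 4 + 8 * k := by
  set N : ℤ := ((2 ^ l : ℕ) : ℤ) - 1
  have hN : 1 ≤ N := by
    have := Nat.one_lt_two_pow_iff.mpr (by omega : l ≠ 0)
    omega
  have hΔ : ∀ d, d ∈ ΔS ↔ ∃ z : ℤ[i], InBox N z ∧ d = 2 * z := fun d => by
    rw [hΔS, hS, ← mem_differences_qamSignalSet_iff, qamSignalSet]
    push_cast
    rfl
  have hDplus : ∀ g, g ∈ Dplus ↔ InBox N g ∧ IsFirstQuadrant g :=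
    fun g => (hD g).trans (exists_mem_half_eq_iff hΔ g)
  set C := (Dplus ×ˢ Dplus).filter fun p => IsCoprime p.1 p.2
  have hH' : H = (unitsFinset ×ˢ C).image fun q => ((q.1 * q.2.1 : ℤ[i]) : ℂ) / q.2.2 := by
    ext h
    rw [hH, mem_image, exists_mem_div_eq_iff hΔ, exists_inBox_div_eq_iff]
    simp only [C, mem_image, mem_product, mem_filter, Prod.exists, hDplus,
      isUnit_iff_mem_unitsFinset]
    aesop
  rw [hH', card_image_of_injOn, card_product, card_unitsFinset, card_filter_isCoprime_product,
    card_filter_offDiag_eq_two_mul Dplus (r := IsCoprime) (fun _ _ => IsCoprime.symm), hk]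
  · ring
  · exact fun z hz => ((hDplus z).mp hz).2
  · exact (hDplus 1).mpr ⟨⟨by simpa using hN, by simpa using zero_le_one.trans hN⟩, one_pos, le_rfl⟩
  · refine injOn_unit_mul_div.mono fun q hq => ?_
    simp only [C, coe_product, Set.mem_prod, mem_coe, mem_filter, mem_product, hDplus,
      ← isUnit_iff_mem_unitsFinset] at hq
    exact ⟨hq.1, hq.2.1.1.2, hq.2.1.2.2, hq.2.2⟩
end

section
/- Let M = 2^(2λ) with λ ≥ 1, let S be the square M-QAM signal set, and let H = {d/d' : d, d' ∈ ΔS, d ≠ 0, d' ≠ 0} be its set of singular fade states, where ΔS is the difference constellation of S. Then |H| ≤ 4(n² - n + 1), where n = ((2√M - 1)² - 1)/4 = M - √M. -/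
open Finset

private lemma qam_aux_I_mem (l : ℕ) (z : ℂ)
    (hz : z ∈ ((Finset.range (2 ^ l)) ×ˢ (Finset.range (2 ^ l))).image
      (fun p : ℕ × ℕ =>
        (2 * (p.1 : ℂ) - ((2 : ℂ) ^ l - 1)) + (2 * (p.2 : ℂ) - ((2 : ℂ) ^ l - 1)) * Complex.I)) :
    Complex.I * z ∈ ((Finset.range (2 ^ l)) ×ˢ (Finset.range (2 ^ l))).image
      (fun p : ℕ × ℕ =>
        (2 * (p.1 : ℂ) - ((2 : ℂ) ^ l - 1)) + (2 * (p.2 : ℂ) - ((2 : ℂ) ^ l - 1)) * Complex.I) := by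
  simp only [Finset.mem_image, Finset.mem_product, Finset.mem_range] at hz ⊢
  obtain ⟨⟨p, q⟩, ⟨hp, hq⟩, rfl⟩ := hz
  have h2 : 1 ≤ 2 ^ l := Nat.one_le_two_pow
  refine ⟨(2 ^ l - 1 - q, p), ⟨by omega, hp⟩, ?_⟩
  rw [Nat.cast_sub (by omega : q ≤ 2 ^ l - 1), Nat.cast_sub h2]
  push_cast
  linear_combination ((2 : ℂ) ^ l - 1 - 2 * (q : ℂ)) * Complex.I_sq

/-- For the square `M`-QAM signal set (`M = 2^(2λ)`) with singular fade
state set `H`, we have `|H| ≤ 4(n² - n + 1)` where `n = ((2√M - 1)² - 1)/4 = M - √M`. -/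
theorem qam_card_singular_fade_states_upper_bound (l : ℕ) (hl : 1 ≤ l)
    (S : Finset ℂ)
    (hS : S = ((Finset.range (2 ^ l)) ×ˢ (Finset.range (2 ^ l))).image
      (fun p : ℕ × ℕ =>
        (2 * (p.1 : ℂ) - ((2 : ℂ) ^ l - 1)) + (2 * (p.2 : ℂ) - ((2 : ℂ) ^ l - 1)) * Complex.I))
    (ΔS : Finset ℂ)
    (hΔS : ΔS = (S ×ˢ S).image (fun p : ℂ × ℂ => p.1 - p.2))
    (H : Finset ℂ)
    (hH : H = ((ΔS ×ˢ ΔS).filter (fun p : ℂ × ℂ => p.1 ≠ 0 ∧ p.2 ≠ 0)).image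
      (fun p : ℂ × ℂ => p.1 / p.2))
    (n : ℕ) (hn : n = 2 ^ (2 * l) - 2 ^ l) :
    H.card ≤ 4 * (n ^ 2 - n + 1) := by
  classical
  have hK1 : 1 ≤ 2 ^ l := Nat.one_le_two_pow
  have hK2 : 2 ≤ 2 ^ l := by
    calc 2 = 2 ^ 1 := rfl
    _ ≤ 2 ^ l := Nat.pow_le_pow_right (by norm_num) hl
  -- closure properties of ΔS
  have hSI : ∀ z ∈ S, Complex.I * z ∈ S := by
    intro z hz; rw [hS] at hz ⊢; exact qam_aux_I_mem l z hz
  have hΔmem : ∀ d ∈ ΔS, ∃ x ∈ S, ∃ y ∈ S, x - y = d := by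
    intro d hd; rw [hΔS] at hd
    simp only [Finset.mem_image, Finset.mem_product, Prod.exists] at hd
    obtain ⟨x, y, ⟨hx, hy⟩, h⟩ := hd
    exact ⟨x, hx, y, hy, h⟩
  have hΔof : ∀ x ∈ S, ∀ y ∈ S, x - y ∈ ΔS := by
    intro x hx y hy; rw [hΔS]
    exact Finset.mem_image.2 ⟨(x, y), Finset.mem_product.2 ⟨hx, hy⟩, rfl⟩
  have hΔneg : ∀ d ∈ ΔS, -d ∈ ΔS := by
    intro d hd
    obtain ⟨x, hx, y, hy, h⟩ := hΔmem d hd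
    have := hΔof y hy x hx
    rw [show y - x = -d by rw [← h]; ring] at this
    exact this
  have hΔI : ∀ d ∈ ΔS, Complex.I * d ∈ ΔS := by
    intro d hd
    obtain ⟨x, hx, y, hy, h⟩ := hΔmem d hd
    have := hΔof _ (hSI x hx) _ (hSI y hy)
    rw [show Complex.I * x - Complex.I * y = Complex.I * d by rw [← h]; ring] at this
    exact this
  -- 0 ∈ ΔS
  have hS0 : S.Nonempty := by
    rw [hS]
    refine Finset.Nonempty.image ?_ _
    refine Finset.Nonempty.product ?_ ?_ <;> exact ⟨0, Finset.mem_range.2 (by omega)⟩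
  have h0Δ : (0 : ℂ) ∈ ΔS := by
    obtain ⟨x, hx⟩ := hS0
    have := hΔof x hx x hx; simpa using this
  -- the set D of nonzero differences
  set D : Finset ℂ := ΔS.erase 0 with hD
  set G : Finset ℂ := {1, -1, Complex.I, -Complex.I} with hG
  have hGmem : ∀ g ∈ G, g ≠ 0 ∧ ∀ d ∈ D, g * d ∈ D := by
    intro g hg
    simp only [hG, Finset.mem_insert, Finset.mem_singleton] at hg
    have key : ∀ d ∈ D, g * d ∈ ΔS ∧ g * d ≠ 0 → g * d ∈ D := by
      intro d hd ⟨h1, h2⟩; exact Finset.mem_erase.2 ⟨h2, h1⟩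
    have hdD : ∀ d ∈ D, d ∈ ΔS ∧ d ≠ 0 := by
      intro d hd; exact ⟨Finset.mem_of_mem_erase hd, (Finset.mem_erase.1 hd).1⟩
    rcases hg with rfl | rfl | rfl | rfl
    · refine ⟨one_ne_zero, fun d hd => by simpa using hd⟩
    · refine ⟨by norm_num, fun d hd => ?_⟩
      obtain ⟨h1, h2⟩ := hdD d hd
      exact key d hd ⟨by simpa using hΔneg d h1, by simpa using h2⟩
    · refine ⟨Complex.I_ne_zero, fun d hd => ?_⟩
      obtain ⟨h1, h2⟩ := hdD d hd
      exact key d hd ⟨hΔI d h1, mul_ne_zero Complex.I_ne_zero h2⟩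
    · refine ⟨by simpa using Complex.I_ne_zero, fun d hd => ?_⟩
      obtain ⟨h1, h2⟩ := hdD d hd
      refine key d hd ⟨?_, mul_ne_zero (by simpa using Complex.I_ne_zero) h2⟩
      have := hΔneg _ (hΔI d h1)
      rw [show -(Complex.I * d) = -Complex.I * d by ring] at this
      exact this
  have hGcard : G.card = 4 := by
    rw [hG]
    rw [Finset.card_insert_of_notMem (by norm_num [Complex.ext_iff]),
      Finset.card_insert_of_notMem (by norm_num [Complex.ext_iff]),
      Finset.card_insert_of_notMem (by norm_num [Complex.ext_iff]),
      Finset.card_singleton]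
  -- rewrite H as image over D ×ˢ D
  have hP : (ΔS ×ˢ ΔS).filter (fun p : ℂ × ℂ => p.1 ≠ 0 ∧ p.2 ≠ 0) = D ×ˢ D := by
    ext ⟨a, b⟩
    simp only [Finset.mem_filter, Finset.mem_product, hD, Finset.mem_erase]
    tauto
  rw [hP] at hH
  set P : Finset (ℂ × ℂ) := D ×ˢ D with hPdef
  set P' : Finset (ℂ × ℂ) := P.filter (fun p => p.1 / p.2 ∉ G) with hP'
  -- split H
  have hsplit : (H ∩ G).card + (H \ G).card = H.card := Finset.card_inter_add_card_sdiff H G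
  have hHG : (H ∩ G).card ≤ 4 := by
    calc (H ∩ G).card ≤ G.card := Finset.card_le_card Finset.inter_subset_right
    _ = 4 := hGcard
  -- fiber lower bound
  have hmaps : ∀ p ∈ P', p.1 / p.2 ∈ H \ G := by
    intro p hp
    rw [hP', Finset.mem_filter] at hp
    exact Finset.mem_sdiff.2 ⟨hH ▸ Finset.mem_image_of_mem _ hp.1, hp.2⟩
  have hfiber : ∀ h ∈ H \ G, 4 ≤ (P'.filter (fun p => p.1 / p.2 = h)).card := by
    intro h hh
    obtain ⟨hhH, hhG⟩ := Finset.mem_sdiff.1 hh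
    rw [hH] at hhH
    obtain ⟨⟨d, d'⟩, hdd, hratio⟩ := Finset.mem_image.1 hhH
    obtain ⟨hd, hd'⟩ := Finset.mem_product.1 hdd
    have hdne : d ≠ 0 := (Finset.mem_erase.1 hd).1
    have hd'ne : d' ≠ 0 := (Finset.mem_erase.1 hd').1
    have hsub : G.image (fun g => (g * d, g * d')) ⊆ P'.filter (fun p => p.1 / p.2 = h) := by
      intro p hp
      obtain ⟨g, hg, rfl⟩ := Finset.mem_image.1 hp
      obtain ⟨hgne, hgD⟩ := hGmem g hg
      have hr : g * d / (g * d') = h := by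
        rw [mul_div_mul_left d d' hgne]; exact hratio
      refine Finset.mem_filter.2 ⟨Finset.mem_filter.2 ⟨?_, ?_⟩, hr⟩
      · exact Finset.mem_product.2 ⟨hgD d hd, hgD d' hd'⟩
      · simpa [hr] using hhG
    have hinj : Set.InjOn (fun g => (g * d, g * d')) G := by
      intro a _ b _ hab
      have : a * d = b * d := congrArg Prod.fst hab
      exact mul_right_cancel₀ hdne this
    calc 4 = G.card := hGcard.symm
    _ = (G.image (fun g => (g * d, g * d'))).card := (Finset.card_image_of_injOn hinj).symm
    _ ≤ _ := Finset.card_le_card hsub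
  have hmain : 4 * (H \ G).card ≤ P'.card :=
    Finset.mul_card_image_le_card_of_maps_to hmaps 4 hfiber
  -- lower bound on pairs with ratio in G
  have hQ : 4 * D.card ≤ (P.filter (fun p => p.1 / p.2 ∈ G)).card := by
    have hsub : ∀ p ∈ G ×ˢ D, (p.2, p.1 * p.2) ∈ P.filter (fun p => p.1 / p.2 ∈ G) := by
      intro ⟨g, d⟩ hp
      obtain ⟨hg, hd⟩ := Finset.mem_product.1 hp
      obtain ⟨hgne, hgD⟩ := hGmem g hg
      have hdne : d ≠ 0 := (Finset.mem_erase.1 hd).1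
      refine Finset.mem_filter.2 ⟨Finset.mem_product.2 ⟨hd, hgD d hd⟩, ?_⟩
      have : d / (g * d) = g⁻¹ := by
        rw [mul_comm g d, ← div_div, div_self hdne, one_div]
      rw [this]
      simp only [hG, Finset.mem_insert, Finset.mem_singleton] at hg ⊢
      rcases hg with rfl | rfl | rfl | rfl
      · left; norm_num
      · right; left; norm_num
      · right; right; right; simp [Complex.inv_I]
      · right; right; left
        rw [show (-Complex.I)⁻¹ = -Complex.I⁻¹ by ring, Complex.inv_I]; ring
    have hinj : Set.InjOn (fun p : ℂ × ℂ => (p.2, p.1 * p.2)) ↑(G ×ˢ D) := by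
      intro a ha c hc hab
      simp only [Finset.mem_coe, Finset.mem_product] at ha hc
      have h1 : a.2 = c.2 := congrArg Prod.fst hab
      have h2 : a.1 * a.2 = c.1 * c.2 := congrArg Prod.snd hab
      rw [← h1] at h2
      have hbne : a.2 ≠ 0 := (Finset.mem_erase.1 ha.2).1
      exact Prod.ext (mul_right_cancel₀ hbne h2) h1
    calc 4 * D.card = (G ×ˢ D).card := by rw [Finset.card_product, hGcard]
    _ ≤ _ := Finset.card_le_card_of_injOn _ (fun p hp => hsub p hp) hinj
  have hPsplit : (P.filter (fun p => p.1 / p.2 ∈ G)).card + P'.card = P.card := by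
    rw [hP']
    exact Finset.card_filter_add_card_filter_not _
  have hPcard : P.card = D.card * D.card := by
    rw [hPdef, Finset.card_product]
  -- cardinality of D
  have hDcard : D.card ≤ 4 * n := by
    have hΔsub : ΔS ⊆ ((Finset.range (2 ^ (l + 1) - 1)) ×ˢ (Finset.range (2 ^ (l + 1) - 1))).image
        (fun p : ℕ × ℕ =>
          (2 * (p.1 : ℂ) - 2 * ((2 : ℂ) ^ l - 1)) + (2 * (p.2 : ℂ) - 2 * ((2 : ℂ) ^ l - 1)) * Complex.I) := by
      intro d hd
      obtain ⟨x, hx, y, hy, h⟩ := hΔmem d hd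
      rw [hS] at hx hy
      simp only [Finset.mem_image, Finset.mem_product, Finset.mem_range] at hx hy
      obtain ⟨⟨p1, p2⟩, ⟨hp1, hp2⟩, rfl⟩ := hx
      obtain ⟨⟨q1, q2⟩, ⟨hq1, hq2⟩, rfl⟩ := hy
      simp only [Finset.mem_image, Finset.mem_product, Finset.mem_range]
      refine ⟨(p1 + 2 ^ l - 1 - q1, p2 + 2 ^ l - 1 - q2), ⟨?_, ?_⟩, ?_⟩
      · have : 2 ^ (l + 1) = 2 * 2 ^ l := by ring
        omega
      · have : 2 ^ (l + 1) = 2 * 2 ^ l := by ring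
        omega
      · have e1 : ((p1 + 2 ^ l - 1 - q1 : ℕ) : ℂ) = (p1 : ℂ) + 2 ^ l - 1 - q1 := by
          rw [Nat.cast_sub (by omega), Nat.cast_sub (by omega)]
          push_cast; ring
        have e2 : ((p2 + 2 ^ l - 1 - q2 : ℕ) : ℂ) = (p2 : ℂ) + 2 ^ l - 1 - q2 := by
          rw [Nat.cast_sub (by omega), Nat.cast_sub (by omega)]
          push_cast; ring
        rw [← h]
        simp only [e1, e2]
        push_cast
        ring
    have hΔcard : ΔS.card ≤ (2 ^ (l + 1) - 1) * (2 ^ (l + 1) - 1) := by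
      calc ΔS.card ≤ _ := Finset.card_le_card hΔsub
      _ ≤ ((Finset.range (2 ^ (l + 1) - 1)) ×ˢ (Finset.range (2 ^ (l + 1) - 1))).card :=
        Finset.card_image_le
      _ = _ := by rw [Finset.card_product, Finset.card_range]
    have hDc : D.card = ΔS.card - 1 := Finset.card_erase_of_mem h0Δ
    -- arithmetic
    obtain ⟨K', hK'⟩ : ∃ K', 2 ^ l = K' + 2 := ⟨2 ^ l - 2, by omega⟩
    obtain ⟨A, hA⟩ : ∃ A, A = K' * K' := ⟨_, rfl⟩
    have h2l : 2 ^ (2 * l) = 2 ^ l * 2 ^ l := by rw [two_mul, pow_add]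
    have h2l1 : 2 ^ (l + 1) = 2 * 2 ^ l := by ring
    rw [hK'] at h2l h2l1
    have e1 : (K' + 2) * (K' + 2) = A + 4 * K' + 4 := by rw [hA]; ring
    have e2 : (2 * (K' + 2) - 1) * (2 * (K' + 2) - 1) = 4 * A + 12 * K' + 9 := by
      have h' : 2 * (K' + 2) - 1 = 2 * K' + 3 := by omega
      rw [h', hA]; ring
    rw [h2l1, e2] at hΔcard
    rw [h2l, e1, hK'] at hn
    omega
  -- final arithmetic
  obtain ⟨C, hC⟩ : ∃ C, C = D.card * D.card := ⟨_, rfl⟩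
  obtain ⟨B, hB⟩ : ∃ B, B = n * n := ⟨_, rfl⟩
  have hn1 : 1 ≤ n := by
    have h2l : 2 ^ (2 * l) = 2 ^ l * 2 ^ l := by rw [two_mul, pow_add]
    rw [h2l] at hn
    have hmul : 2 ^ l * 2 ≤ 2 ^ l * 2 ^ l := Nat.mul_le_mul_left _ hK2
    obtain ⟨X, hX⟩ : ∃ X, X = 2 ^ l * 2 ^ l := ⟨_, rfl⟩
    rw [← hX] at hn hmul
    omega
  have hBn : n ≤ B := by
    rw [hB]; exact Nat.le_mul_of_pos_left n (by omega)
  have hkey : C - 4 * D.card ≤ 16 * B - 16 * n := by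
    have h1 : D.card * (D.card - 4) = C - 4 * D.card := by
      rw [hC, Nat.mul_sub, mul_comm D.card 4]
    have h2 : D.card * (D.card - 4) ≤ (4 * n) * (4 * n - 4) :=
      Nat.mul_le_mul hDcard (by omega)
    have h3 : (4 * n) * (4 * n - 4) = 16 * B - 16 * n := by
      rw [Nat.mul_sub]
      have e1 : 4 * n * (4 * n) = 16 * B := by rw [hB]; ring
      have e2 : 4 * n * 4 = 16 * n := by ring
      rw [e1, e2]
    omega
  have hn2 : n ^ 2 = B := by rw [hB, sq]
  rw [hn2]
  have hfinal : 4 * (H \ G).card ≤ 16 * B - 16 * n := by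
    have : P'.card ≤ C - 4 * D.card := by
      rw [hC, ← hPcard]
      omega
    omega
  omega
end

section
/- Let M = 2^(2λ) with λ ≥ 1 and let S be the square M-QAM signal set (note that S is closed under complex conjugation and under the map x ↦ i·conj(x)). Let T be any type, f : S × S → T a map, and z ∈ ℂ. If f removes the fade state z, then the map f' : S × S → T defined by f'(x, y) = f(i·conj(x), conj(y)) removes the fade state i·conj(z); in polar form, if f removes γe^{iθ} then f' removes γe^{i(π/2 - θ)}. -/
/-!
Conjugating `(x_A - x_A') + w·(x_B - x_B') = 0` and multiplying by `u ≠ 0` gives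
`(u·conj x_A - u·conj x_A') + z·(conj x_B - conj x_B') = 0` with `z = u·conj w`, an equation of
the same shape for the transformed points. So if `S` is closed under `conj` and `x ↦ u·conj x`,
the transformed map removes `w = conj (z / u)` whenever `f` removes `z`. The square QAM
constellation is closed under `conj` (reflect the imaginary level) and under `x ↦ i·conj x`
(swap the two levels), and `conj (z / i) = i·conj z`.
-/

/-- A map `f : S × S → T` removes the fade state `z` if whenever
`f (x_A, x_B) ≠ f (x_A', x_B')` one has `(x_A - x_A') + z·(x_B - x_B') ≠ 0`. -/
def RemovesFadeState {T : Type*} (S : Finset ℂ) (f : ℂ → ℂ → T) (z : ℂ) : Prop :=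
  ∀ xA ∈ S, ∀ xB ∈ S, ∀ xA' ∈ S, ∀ xB' ∈ S,
    f xA xB ≠ f xA' xB' → (xA - xA') + z * (xB - xB') ≠ 0

open Complex ComplexConjugate

theorem RemovesFadeState.comp_mul_conj {T : Type*} {S : Finset ℂ} {f : ℂ → ℂ → T} {z u : ℂ}
    (hf : RemovesFadeState S f z) (hu : u ≠ 0)
    (hSu : ∀ x ∈ S, u * conj x ∈ S) (hS : ∀ x ∈ S, conj x ∈ S) :
    RemovesFadeState S (fun x y => f (u * conj x) (conj y)) (conj (z / u)) := by
  intro xA hA xB hB xA' hA' xB' hB' hne hzero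
  refine hf _ (hSu xA hA) _ (hS xB hB) _ (hSu xA' hA') _ (hS xB' hB') hne ?_
  calc u * conj xA - u * conj xA' + z * (conj xB - conj xB')
      = u * conj (xA - xA' + conj (z / u) * (xB - xB')) := by
        simp only [map_add, map_sub, map_mul, conj_conj]
        field_simp
    _ = 0 := by rw [hzero, map_zero, mul_zero]

/-- The coordinate levels `2p - (2^l - 1)`, `p < 2^l`, of the square `4^l`-QAM constellation. -/
def qamLevel (l p : ℕ) : ℂ := 2 * p - ((2 : ℂ) ^ l - 1)

noncomputable def qamSet (l : ℕ) : Finset ℂ :=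
  ((Finset.range (2 ^ l)) ×ˢ (Finset.range (2 ^ l))).image
    (fun p : ℕ × ℕ => qamLevel l p.1 + qamLevel l p.2 * I)

theorem qamLevel_reflect {l p : ℕ} (hp : p < 2 ^ l) :
    qamLevel l (2 ^ l - 1 - p) = -qamLevel l p := by
  have hcast : ((2 ^ l - 1 - p : ℕ) : ℂ) = (2 : ℂ) ^ l - 1 - p := by
    rw [Nat.sub_sub, Nat.cast_sub (by omega : 1 + p ≤ 2 ^ l)]
    push_cast
    ring
  simp only [qamLevel, hcast]
  ring

theorem conj_qamLevel (l p : ℕ) : conj (qamLevel l p) = qamLevel l p := by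
  simp only [qamLevel, map_sub, map_mul, map_pow, map_ofNat, map_one, conj_natCast]

theorem mem_qamSet {l : ℕ} {x : ℂ} :
    x ∈ qamSet l ↔ ∃ p < 2 ^ l, ∃ q < 2 ^ l, qamLevel l p + qamLevel l q * I = x := by
  simp [qamSet, and_assoc]

theorem conj_mem_qamSet {l : ℕ} {x : ℂ} (hx : x ∈ qamSet l) : conj x ∈ qamSet l := by
  obtain ⟨p, hp, q, hq, rfl⟩ := mem_qamSet.1 hx
  refine mem_qamSet.2 ⟨p, hp, 2 ^ l - 1 - q, by omega, ?_⟩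
  rw [qamLevel_reflect hq, map_add, map_mul, conj_qamLevel, conj_qamLevel, conj_I]
  ring

theorem I_mul_conj_mem_qamSet {l : ℕ} {x : ℂ} (hx : x ∈ qamSet l) : I * conj x ∈ qamSet l := by
  obtain ⟨p, hp, q, hq, rfl⟩ := mem_qamSet.1 hx
  refine mem_qamSet.2 ⟨q, hq, p, hp, ?_⟩
  rw [map_add, map_mul, conj_qamLevel, conj_qamLevel, conj_I]
  linear_combination qamLevel l q * I_sq

theorem qam_reflect_removes_general {T : Type*} (l : ℕ)
    (S : Finset ℂ)
    (hS : S = ((Finset.range (2 ^ l)) ×ˢ (Finset.range (2 ^ l))).image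
      (fun p : ℕ × ℕ =>
        (2 * (p.1 : ℂ) - ((2 : ℂ) ^ l - 1)) + (2 * (p.2 : ℂ) - ((2 : ℂ) ^ l - 1)) * Complex.I))
    (f : ℂ → ℂ → T) (z : ℂ)
    (hf : RemovesFadeState S f z) :
    RemovesFadeState S
      (fun x y => f (Complex.I * (starRingEnd ℂ) x) ((starRingEnd ℂ) y))
      (Complex.I * (starRingEnd ℂ) z) := by
  obtain rfl : S = qamSet l := hS
  have hz : I * conj z = conj (z / I) := by
    rw [div_I, map_neg, map_mul, conj_I]
    ring
  rw [hz]
  exact hf.comp_mul_conj I_ne_zero (fun _ => I_mul_conj_mem_qamSet) (fun _ => conj_mem_qamSet)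

/-- For the square `M`-QAM signal set `S` (`M = 2^(2λ)`), if `f` removes
the fade state `z = γe^{iθ}`, then `f'(x, y) = f(i·conj(x), conj(y))` removes the fade
state `i·conj(z) = γe^{i(π/2 - θ)}`. -/
theorem qam_reflect_removes {T : Type*} (l : ℕ) (hl : 1 ≤ l)
    (S : Finset ℂ)
    (hS : S = ((Finset.range (2 ^ l)) ×ˢ (Finset.range (2 ^ l))).image
      (fun p : ℕ × ℕ =>
        (2 * (p.1 : ℂ) - ((2 : ℂ) ^ l - 1)) + (2 * (p.2 : ℂ) - ((2 : ℂ) ^ l - 1)) * Complex.I))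
    (f : ℂ → ℂ → T) (z : ℂ)
    (hf : RemovesFadeState S f z) :
    RemovesFadeState S
      (fun x y => f (Complex.I * (starRingEnd ℂ) x) ((starRingEnd ℂ) y))
      (Complex.I * (starRingEnd ℂ) z) :=
  qam_reflect_removes_general l S hS f z hf
end

section
/- Let M = 2^(2λ) with λ ≥ 2 (so M > 4), let S be the square M-QAM signal set, let V be any 𝔽₂-vector space (equivalently, any additive group in which every element is its own inverse), and let μ : S → V be any injective map. Then the map f : S × S → V defined by f(x, y) = μ(x) + μ(y) does not remove the fade state z = 1; that is, there exist (x_A, x_B), (x_A', x_B') ∈ S × S with f(x_A, x_B) ≠ f(x_A', x_B') and (x_A - x_A') + (x_B - x_B') = 0. In particular, the bitwise-XOR network coding map fails to remove the singular fade state 1 for M-QAM with M > 4. -/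
/-! If `a, b, c` is a three-term arithmetic progression in the signal set, then
`(a - b) + (c - b) = 0`, while an injective `μ` into a group of exponent two gives
`μ a + μ c ≠ 0 = μ b + μ b`. For `λ ≥ 2` every row of the `M`-QAM constellation has at
least three consecutive points, which form such a progression. -/

theorem exists_add_ne_add_of_add_eq_add_self {G V : Type*} [AddCommGroup G] [AddCommGroup V]
    (hV : ∀ v : V, v + v = 0) {S : Set G} {μ : G → V} (hμ : Set.InjOn μ S)
    {a b c : G} (ha : a ∈ S) (hb : b ∈ S) (hc : c ∈ S) (hac : a ≠ c) (habc : a + c = b + b) :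
    ∃ xA ∈ S, ∃ xB ∈ S, ∃ xA' ∈ S, ∃ xB' ∈ S,
      μ xA + μ xB ≠ μ xA' + μ xB' ∧ (xA - xA') + (xB - xB') = 0 := by
  refine ⟨a, ha, c, hc, b, hb, b, hb, fun h ↦ hac (hμ ha hc ?_), ?_⟩
  · have hsum : μ a + μ c = 0 := h.trans (hV _)
    exact (eq_neg_of_add_eq_zero_left hsum).trans (neg_eq_of_add_eq_zero_left (hV _))
  · rw [sub_add_sub_comm, habc, sub_self]

/-- For the square `M`-QAM signal set `S` with `M = 2^(2λ)`, `λ ≥ 2`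
(so `M > 4`), any additive group `V` in which every element is its own inverse (an
`𝔽₂`-vector space), and any map `μ : S → V` injective on `S`, the XOR-type map
`f(x, y) = μ(x) + μ(y)` does NOT remove the fade state `z = 1`: there exist
`(x_A, x_B), (x_A', x_B') ∈ S × S` with `f(x_A,x_B) ≠ f(x_A',x_B')` and
`(x_A - x_A') + (x_B - x_B') = 0`. -/
theorem qam_xor_fails_to_remove_one {V : Type*} [AddCommGroup V]
    (hV : ∀ v : V, v + v = 0)
    (l : ℕ) (hl : 2 ≤ l)
    (S : Finset ℂ)
    (hS : S = ((Finset.range (2 ^ l)) ×ˢ (Finset.range (2 ^ l))).image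
      (fun p : ℕ × ℕ =>
        (2 * (p.1 : ℂ) - ((2 : ℂ) ^ l - 1)) + (2 * (p.2 : ℂ) - ((2 : ℂ) ^ l - 1)) * Complex.I))
    (μ : ℂ → V) (hμ : Set.InjOn μ ↑S) :
    ∃ xA ∈ S, ∃ xB ∈ S, ∃ xA' ∈ S, ∃ xB' ∈ S,
      μ xA + μ xB ≠ μ xA' + μ xB' ∧ (xA - xA') + (xB - xB') = 0 := by
  set x : ℕ → ℂ := fun n ↦
    (2 * (n : ℂ) - ((2 : ℂ) ^ l - 1)) + (2 * ((0 : ℕ) : ℂ) - ((2 : ℂ) ^ l - 1)) * Complex.I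
  have hrow : 2 < 2 ^ l := calc
    2 < 2 ^ 2 := by norm_num
    _ ≤ 2 ^ l := Nat.pow_le_pow_right two_pos hl
  have hx : ∀ n < 2 ^ l, x n ∈ S := fun n hn ↦ hS ▸ Finset.mem_image.2
    ⟨(n, 0), Finset.mem_product.2 ⟨Finset.mem_range.2 hn, Finset.mem_range.2 (by positivity)⟩, rfl⟩
  have hx02 : x 0 ≠ x 2 := fun h ↦ by have := congrArg Complex.re h; simp [x] at this; linarith
  have hap : x 0 + x 2 = x 1 + x 1 := by simp only [x]; push_cast; ring
  simpa only [Finset.mem_coe] using exists_add_ne_add_of_add_eq_add_self hV hμ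
    (hx 0 (by omega)) (hx 1 (by omega)) (hx 2 (by omega)) hx02 hap
end

section
/- Let M = 2^(2λ) with λ ≥ 1 and set N = √M = 2^λ. Define ν : {0,…,N-1} → ℝ by ν(k) = -(N-1) + 2k, and label the square M-QAM signal set by x(I, p) = ν(I) + i·ν(p) for (I, p) ∈ {0,…,N-1}². Define f : ({0,…,N-1}²) × ({0,…,N-1}²) → ZMod N × ZMod N by f((I, p), (J, q)) = (I + J mod N, p + q mod N) (the doubly block circulant Latin square). Then: (i) f satisfies the exclusive law, i.e., f(u, v) ≠ f(u', v) whenever u ≠ u' and f(u, v) ≠ f(u, v') whenever v ≠ v'; and (ii) f removes the fade state z = 1, i.e., whenever x(I, p) + x(J, q) = x(I', p') + x(J', q') one has f((I, p), (J, q)) = f((I', p'), (J', q')). -/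
/-! Both coordinates of `f` add the labels after casting them injectively from `Fin N` into
`ZMod N`, so cancellation in the group `ZMod N × ZMod N` gives the exclusive law. Since `ν` is
affine with nonzero slope, the real and imaginary parts of `x (I, p) + x (J, q)` determine the
integer sums `I + J` and `p + q`, and these determine `f ((I, p), (J, q))`. -/

open Function

theorem Fin.natCast_zmod_injective (n : ℕ) : Injective fun a : Fin n => ((a : ℕ) : ZMod n) := by
  intro a b h
  have : NeZero n := NeZero.of_pos a.pos
  have hval := congrArg ZMod.val h
  simp only [ZMod.val_natCast_of_lt a.isLt, ZMod.val_natCast_of_lt b.isLt] at hval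
  exact Fin.ext hval

theorem Complex.ofReal_add_I_mul_add_eq_iff (a b c d a' b' c' d' : ℝ) :
    ((a : ℂ) + I * b) + ((c : ℂ) + I * d) = ((a' : ℂ) + I * b') + ((c' : ℂ) + I * d') ↔
      a + c = a' + c' ∧ b + d = b' + d' := by
  simp [Complex.ext_iff]

theorem Fin.add_eq_add_iff_of_affine {n : ℕ} {ν : Fin n → ℝ} {a b : ℝ} (hb : b ≠ 0)
    (hν : ∀ k : Fin n, ν k = a + b * ((k : ℕ) : ℝ)) {i j i' j' : Fin n} :
    ν i + ν j = ν i' + ν j' ↔ (i : ℕ) + j = i' + j' := by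
  rw [hν, hν, hν, hν, ← @Nat.cast_inj ℝ]
  push_cast
  constructor
  · intro h
    exact mul_left_cancel₀ hb (by linarith)
  · intro h
    linear_combination b * h

theorem qam_doubly_block_circulant_latin_square_general (N : ℕ)
    (ν : Fin N → ℝ) (hν : ∀ k : Fin N, ν k = -((N : ℝ) - 1) + 2 * ((k : ℕ) : ℝ))
    (x : Fin N × Fin N → ℂ)
    (hx : ∀ u : Fin N × Fin N, x u = (ν u.1 : ℂ) + Complex.I * (ν u.2 : ℂ))
    (f : Fin N × Fin N → Fin N × Fin N → ZMod N × ZMod N)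
    (hf : ∀ u v : Fin N × Fin N,
      f u v = (((u.1 : ℕ) : ZMod N) + ((v.1 : ℕ) : ZMod N),
               ((u.2 : ℕ) : ZMod N) + ((v.2 : ℕ) : ZMod N))) :
    ((∀ u u' v : Fin N × Fin N, u ≠ u' → f u v ≠ f u' v) ∧
     (∀ u v v' : Fin N × Fin N, v ≠ v' → f u v ≠ f u v')) ∧
    (∀ u v u' v' : Fin N × Fin N, x u + x v = x u' + x v' → f u v = f u' v') := by
  set ι : Fin N × Fin N → ZMod N × ZMod N := Prod.map (fun a => ((a : ℕ) : ZMod N)) fun a => a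
  have hι : Injective ι :=
    (Fin.natCast_zmod_injective N).prodMap (Fin.natCast_zmod_injective N)
  have hfι : ∀ u v, f u v = ι u + ι v := hf
  refine ⟨⟨fun u u' v hne h => hne (hι ?_), fun u v v' hne h => hne (hι ?_)⟩, ?_⟩
  · exact add_right_cancel (by rwa [hfι, hfι] at h)
  · exact add_left_cancel (by rwa [hfι, hfι] at h)
  · intro u v u' v' h
    simp only [hx] at h
    obtain ⟨h₁, h₂⟩ := (Complex.ofReal_add_I_mul_add_eq_iff ..).1 h
    rw [Fin.add_eq_add_iff_of_affine two_ne_zero hν] at h₁ h₂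
    rw [hf, hf, Prod.mk.injEq]
    exact ⟨by exact_mod_cast congrArg (Nat.cast : ℕ → ZMod N) h₁,
      by exact_mod_cast congrArg (Nat.cast : ℕ → ZMod N) h₂⟩

/-- For the square `M`-QAM signal set (`M = 2^(2λ)`, `N = √M = 2^λ`)
labeled by `x(I, p) = ν(I) + i·ν(p)` where `ν(k) = -(N-1) + 2k`, the doubly block
circulant Latin square `f((I,p), (J,q)) = (I + J mod N, p + q mod N)` (i) satisfies
the exclusive law (injective in each argument) and (ii) removes the fade state
`z = 1`: whenever `x(I,p) + x(J,q) = x(I',p') + x(J',q')` one has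
`f((I,p),(J,q)) = f((I',p'),(J',q'))`. -/
theorem qam_doubly_block_circulant_latin_square (l N : ℕ) (hl : 1 ≤ l)
    (hN : N = 2 ^ l)
    (ν : Fin N → ℝ) (hν : ∀ k : Fin N, ν k = -((N : ℝ) - 1) + 2 * ((k : ℕ) : ℝ))
    (x : Fin N × Fin N → ℂ)
    (hx : ∀ u : Fin N × Fin N, x u = (ν u.1 : ℂ) + Complex.I * (ν u.2 : ℂ))
    (f : Fin N × Fin N → Fin N × Fin N → ZMod N × ZMod N)
    (hf : ∀ u v : Fin N × Fin N,
      f u v = (((u.1 : ℕ) : ZMod N) + ((v.1 : ℕ) : ZMod N),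
               ((u.2 : ℕ) : ZMod N) + ((v.2 : ℕ) : ZMod N))) :
    ((∀ u u' v : Fin N × Fin N, u ≠ u' → f u v ≠ f u' v) ∧
     (∀ u v v' : Fin N × Fin N, v ≠ v' → f u v ≠ f u v')) ∧
    (∀ u v u' v' : Fin N × Fin N, x u + x v = x u' + x v' → f u v = f u' v') :=
  qam_doubly_block_circulant_latin_square_general N ν hν x hx f hf
end

section
/- Let S ⊆ ℂ be a finite set with at least two elements, let d_min(S) = min{|x - x'| : x, x' ∈ S, x ≠ x'}, let T be any type, and let f : S × S → T satisfy the exclusive law. Then for every z ∈ ℂ, the minimum cluster distance of f at z satisfies d_f(z) ≤ min(d_min(S), |z|·d_min(S)), where d_f(z) = min{|(x_A - x_A') + z·(x_B - x_B')| : (x_A,x_B), (x_A',x_B') ∈ S × S, f(x_A,x_B) ≠ f(x_A',x_B')}. -/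
/-!
Take `x ≠ x'` in `S` with `‖x - x'‖ = d_min(S)`. By the exclusive law `f` separates `(x, x)`
from `(x', x)` and from `(x, x')`, and these two pairs have cluster distances `d_min(S)` and
`‖z‖ · d_min(S)` from `(x, x)`.
-/

open Finset

section PairDistances

variable {E : Type*} [SeminormedAddCommGroup E]

theorem exists_sInf_norm_sub_eq (S : Finset E) (hS : 2 ≤ #S) :
    ∃ x ∈ S, ∃ x' ∈ S, x ≠ x' ∧
      sInf {r : ℝ | ∃ x ∈ S, ∃ x' ∈ S, x ≠ x' ∧ r = ‖x - x'‖} = ‖x - x'‖ := by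
  set R : Set ℝ := {r : ℝ | ∃ x ∈ S, ∃ x' ∈ S, x ≠ x' ∧ r = ‖x - x'‖}
  have hfin : R.Finite := by
    refine ((S ×ˢ S).finite_toSet.image fun p : E × E => ‖p.1 - p.2‖).subset ?_
    rintro _ ⟨x, hx, x', hx', -, rfl⟩
    exact ⟨(x, x'), by simp [hx, hx'], rfl⟩
  obtain ⟨x, hx, x', hx', hne⟩ := one_lt_card.mp hS
  have hR : R.Nonempty := ⟨_, x, hx, x', hx', hne, rfl⟩
  exact hR.csInf_mem hfin

end PairDistances

section ClusterDistances

variable {𝕜 T : Type*} [NormedDivisionRing 𝕜]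

/-- The minimum cluster distance `d_f(z)` is the infimum of this set. -/
def clusterDistances (S : Finset 𝕜) (f : 𝕜 → 𝕜 → T) (z : 𝕜) : Set ℝ :=
  {r : ℝ | ∃ xA ∈ S, ∃ xB ∈ S, ∃ xA' ∈ S, ∃ xB' ∈ S,
    f xA xB ≠ f xA' xB' ∧ r = ‖(xA - xA') + z * (xB - xB')‖}

theorem bddBelow_clusterDistances (S : Finset 𝕜) (f : 𝕜 → 𝕜 → T) (z : 𝕜) :
    BddBelow (clusterDistances S f z) := by
  refine ⟨0, ?_⟩
  rintro _ ⟨-, -, -, -, -, -, -, -, -, rfl⟩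
  exact norm_nonneg _

theorem norm_sub_mem_clusterDistances {S : Finset 𝕜} {f : 𝕜 → 𝕜 → T}
    (hex1 : ∀ x ∈ S, ∀ x' ∈ S, ∀ y ∈ S, x ≠ x' → f x y ≠ f x' y) (z : 𝕜)
    {x x' : 𝕜} (hx : x ∈ S) (hx' : x' ∈ S) (hne : x ≠ x') :
    ‖x - x'‖ ∈ clusterDistances S f z :=
  ⟨x, hx, x, hx, x', hx', x, hx, hex1 x hx x' hx' x hx hne, by simp⟩

theorem norm_mul_norm_sub_mem_clusterDistances {S : Finset 𝕜} {f : 𝕜 → 𝕜 → T}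
    (hex2 : ∀ x ∈ S, ∀ y ∈ S, ∀ y' ∈ S, y ≠ y' → f x y ≠ f x y') (z : 𝕜)
    {y y' : 𝕜} (hy : y ∈ S) (hy' : y' ∈ S) (hne : y ≠ y') :
    ‖z‖ * ‖y - y'‖ ∈ clusterDistances S f z :=
  ⟨y, hy, y, hy, y, hy, y', hy', hex2 y hy y hy y' hy' hne, by simp⟩

end ClusterDistances

/-- For a finite `S ⊆ ℂ` with at least two elements and any map
`f : S × S → T` satisfying the exclusive law, for every `z ∈ ℂ` the minimum cluster
distance of `f` at `z` is at most `min(d_min(S), |z|·d_min(S))`. -/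
theorem min_cluster_distance_upper_bound {T : Type*} (S : Finset ℂ) (hS : 2 ≤ S.card)
    (f : ℂ → ℂ → T)
    (hex1 : ∀ x ∈ S, ∀ x' ∈ S, ∀ y ∈ S, x ≠ x' → f x y ≠ f x' y)
    (hex2 : ∀ x ∈ S, ∀ y ∈ S, ∀ y' ∈ S, y ≠ y' → f x y ≠ f x y')
    (z : ℂ)
    (dminS : ℝ)
    (hdminS : dminS = sInf {r : ℝ | ∃ x ∈ S, ∃ x' ∈ S, x ≠ x' ∧ r = ‖x - x'‖})
    (df : ℝ)
    (hdf : df = sInf {r : ℝ | ∃ xA ∈ S, ∃ xB ∈ S, ∃ xA' ∈ S, ∃ xB' ∈ S,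
      f xA xB ≠ f xA' xB' ∧ r = ‖(xA - xA') + z * (xB - xB')‖}) :
    df ≤ min dminS (‖z‖ * dminS) := by
  obtain ⟨x, hx, x', hx', hne, hmin⟩ := exists_sInf_norm_sub_eq S hS
  rw [hdminS, hmin, hdf]
  exact le_min
    (csInf_le (bddBelow_clusterDistances S f z) (norm_sub_mem_clusterDistances hex1 z hx hx' hne))
    (csInf_le (bddBelow_clusterDistances S f z)
      (norm_mul_norm_sub_mem_clusterDistances hex2 z hx hx' hne))
end

section
/- Let S ⊆ ℂ be a finite set with at least two elements, d_min(S) = min{|x - x'| : x ≠ x' ∈ S}, and let z ∈ ℂ. Suppose that the effective minimum distance d_min(z) := min{|(x_A - x_A') + z·(x_B - x_B')| : (x_A,x_B) ≠ (x_A',x_B') ∈ S × S} satisfies d_min(z) ≥ min(d_min(S), |z|·d_min(S)). Then for EVERY map f : S × S → T satisfying the exclusive law, the minimum cluster distance of f at z equals min(d_min(S), |z|·d_min(S)); in particular all exclusive-law clusterings achieve the same minimum cluster distance at such z. -/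
/-!
Every cluster distance is an effective distance, since distinct clusters force distinct pairs,
so the minimum cluster distance is at least `d_min(z)`, hence at least
`min(d_min(S), |z| d_min(S))`.
Conversely, if `x ≠ x'` realise `d_min(S)`, the exclusive law separates `(x, x)` from `(x', x)`
and `(x, x)` from `(x, x')`, whose differences have norms `d_min(S)` and `|z| d_min(S)`.
-/

namespace ClusterDistance

variable {K T : Type*}

section SeminormedAddCommGroup

variable [SeminormedAddCommGroup K]

def pairDistances (S : Finset K) : Set ℝ :=
  {r | ∃ x ∈ S, ∃ x' ∈ S, x ≠ x' ∧ r = ‖x - x'‖}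

theorem pairDistances_finite (S : Finset K) : (pairDistances S).Finite := by
  refine ((S ×ˢ S).image fun p => ‖p.1 - p.2‖).finite_toSet.subset ?_
  rintro r ⟨x, hx, x', hx', -, rfl⟩
  simpa using ⟨x, x', ⟨hx, hx'⟩, rfl⟩

theorem sInf_pairDistances_mem {S : Finset K} (hS : 2 ≤ S.card) :
    sInf (pairDistances S) ∈ pairDistances S := by
  obtain ⟨a, ha, b, hb, hab⟩ := Finset.one_lt_card.mp hS
  exact Set.Nonempty.csInf_mem ⟨_, a, ha, b, hb, hab, rfl⟩ (pairDistances_finite S)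

end SeminormedAddCommGroup

section SeminormedRing

variable [SeminormedRing K]

-- `d_f(z)` and `d_min(z)` are the infima of this set for `P` = "different clusters" and
-- "different pairs" respectively.
def distancesAt (S : Finset K) (z : K) (P : K → K → K → K → Prop) : Set ℝ :=
  {r | ∃ xA ∈ S, ∃ xB ∈ S, ∃ xA' ∈ S, ∃ xB' ∈ S,
    P xA xB xA' xB' ∧ r = ‖(xA - xA') + z * (xB - xB')‖}

theorem distancesAt_finite (S : Finset K) (z : K) (P : K → K → K → K → Prop) :
    (distancesAt S z P).Finite := by
  refine (((S ×ˢ S) ×ˢ (S ×ˢ S)).image fun p =>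
    ‖(p.1.1 - p.2.1) + z * (p.1.2 - p.2.2)‖).finite_toSet.subset ?_
  rintro r ⟨xA, hA, xB, hB, xA', hA', xB', hB', -, rfl⟩
  simpa using ⟨xA, xB, xA', xB', ⟨⟨hA, hB⟩, hA', hB'⟩, rfl⟩

theorem distancesAt_mono {S : Finset K} {z : K} {P Q : K → K → K → K → Prop}
    (hPQ : ∀ xA xB xA' xB', P xA xB xA' xB' → Q xA xB xA' xB') :
    distancesAt S z P ⊆ distancesAt S z Q := by
  rintro r ⟨xA, hA, xB, hB, xA', hA', xB', hB', hP, rfl⟩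
  exact ⟨xA, hA, xB, hB, xA', hA', xB', hB', hPQ _ _ _ _ hP, rfl⟩

theorem norm_sub_mem_distancesAt_of_left {S : Finset K} {z : K} {f : K → K → T}
    {x x' : K} (hx : x ∈ S) (hx' : x' ∈ S) (hf : f x x ≠ f x' x) :
    ‖x - x'‖ ∈ distancesAt S z fun xA xB xA' xB' => f xA xB ≠ f xA' xB' :=
  ⟨x, hx, x, hx, x', hx', x, hx, hf, by simp⟩

theorem norm_mul_norm_sub_mem_distancesAt_of_right [NormMulClass K] {S : Finset K} {z : K}
    {f : K → K → T} {x x' : K} (hx : x ∈ S) (hx' : x' ∈ S) (hf : f x x ≠ f x x') :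
    ‖z‖ * ‖x - x'‖ ∈ distancesAt S z fun xA xB xA' xB' => f xA xB ≠ f xA' xB' :=
  ⟨x, hx, x, hx, x, hx, x', hx', hf, by simp [norm_mul]⟩

end SeminormedRing

end ClusterDistance

open ClusterDistance in
/-- For a finite `S ⊆ ℂ` with at least two elements and `z ∈ ℂ` such
that the effective minimum distance `d_min(z)` at `z` satisfies
`d_min(z) ≥ min(d_min(S), |z|·d_min(S))`, EVERY map `f : S × S → T` satisfying the
exclusive law has minimum cluster distance at `z` equal to
`min(d_min(S), |z|·d_min(S))`. -/
theorem min_cluster_distance_clustering_independent {T : Type*}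
    (S : Finset ℂ) (hS : 2 ≤ S.card) (z : ℂ)
    (dminS : ℝ)
    (hdminS : dminS = sInf {r : ℝ | ∃ x ∈ S, ∃ x' ∈ S, x ≠ x' ∧ r = ‖x - x'‖})
    (dminz : ℝ)
    (hdminz : dminz = sInf {r : ℝ | ∃ xA ∈ S, ∃ xB ∈ S, ∃ xA' ∈ S, ∃ xB' ∈ S,
      (xA, xB) ≠ (xA', xB') ∧ r = ‖(xA - xA') + z * (xB - xB')‖})
    (hbig : min dminS (‖z‖ * dminS) ≤ dminz)
    (f : ℂ → ℂ → T)
    (hex1 : ∀ x ∈ S, ∀ x' ∈ S, ∀ y ∈ S, x ≠ x' → f x y ≠ f x' y)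
    (hex2 : ∀ x ∈ S, ∀ y ∈ S, ∀ y' ∈ S, y ≠ y' → f x y ≠ f x y') :
    sInf {r : ℝ | ∃ xA ∈ S, ∃ xB ∈ S, ∃ xA' ∈ S, ∃ xB' ∈ S,
        f xA xB ≠ f xA' xB' ∧ r = ‖(xA - xA') + z * (xB - xB')‖} =
      min dminS (‖z‖ * dminS) := by
  change sInf (distancesAt S z fun xA xB xA' xB' => f xA xB ≠ f xA' xB') = _
  change dminz = sInf (distancesAt S z fun xA xB xA' xB' => (xA, xB) ≠ (xA', xB')) at hdminz
  have hdmin_mem : dminS ∈ pairDistances S := hdminS ▸ sInf_pairDistances_mem hS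
  obtain ⟨x, hx, x', hx', hxx', rfl⟩ := hdmin_mem
  have h_left := norm_sub_mem_distancesAt_of_left (z := z) hx hx' (hex1 x hx x' hx' x hx hxx')
  have h_right :=
    norm_mul_norm_sub_mem_distancesAt_of_right (z := z) hx hx' (hex2 x hx x hx x' hx' hxx')
  have h_bdd := (distancesAt_finite S z fun xA xB xA' xB' => f xA xB ≠ f xA' xB').bddBelow
  refine le_antisymm (le_min (csInf_le h_bdd h_left) (csInf_le h_bdd h_right)) ?_
  calc min ‖x - x'‖ (‖z‖ * ‖x - x'‖) ≤ dminz := hbig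
    _ ≤ _ := hdminz ▸ csInf_le_csInf (distancesAt_finite _ _ _).bddBelow ⟨_, h_left⟩
      (distancesAt_mono fun _ _ _ _ hf hpair => hf (congrArg (Function.uncurry f) hpair))
end

section
/- Let M = 2^(2λ) with λ ≥ 1, let S be the square M-QAM signal set with difference constellation ΔS, d_min(S) = 2, and let Γ_CI(S) = {z ∈ ℂ : |d + z·d'| ≥ min(d_min(S), |z|·d_min(S)) for all (d, d') ∈ ΔS × ΔS with (d, d') ≠ (0, 0)}. Let C_M = {α + β·i : α, β ∈ ℤ, |α| ≤ √M - 1, |β| ≤ √M - 1, max(|α|, |β|) = √M - 1} (a set of 8(√M - 1) points). Then every z ∈ Γ_CI(S) with |z| > 1 satisfies |z - c| ≥ 1 for every c ∈ C_M; that is, the exterior clustering-independent region Γ_CI(S) ∩ {|z| > 1} is contained in the intersection of the exteriors of the 8(√M - 1) unit circles centered at the points of C_M. -/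
/-!
Taking `d = -2c` and `d' = 2` in the defining inequality of `Γ_CI(S)` gives
`2‖z - c‖ = ‖d + z d'‖ ≥ min 2 (2‖z‖) = 2` as soon as `‖z‖ ≥ 1`. Both choices lie in `ΔS`,
because the differences of the QAM points include all `2a + 2bi` with `|a|, |b| ≤ √M - 1`.
-/

open Complex Finset
open scoped Pointwise

lemma Int.exists_natCast_sub_eq_of_abs_lt {n : ℕ} {x : ℤ} (hx : |x| < n) :
    ∃ p q : ℕ, p < n ∧ q < n ∧ (p : ℤ) - q = x := by
  rw [abs_lt] at hx
  exact ⟨x.toNat, (-x).toNat, by omega, by omega, by omega⟩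

/-- Square `N²`-QAM is `squareGrid N (N - 1)`. -/
noncomputable def squareGrid (N : ℕ) (w : ℂ) : Finset ℂ :=
  (range N ×ˢ range N).image fun p => (2 * (p.1 : ℂ) - w) + (2 * (p.2 : ℂ) - w) * I

lemma two_mul_mem_squareGrid_sub {N : ℕ} (w : ℂ) {a b : ℤ} (ha : |a| < N) (hb : |b| < N) :
    2 * ((a : ℂ) + b * I) ∈ squareGrid N w - squareGrid N w := by
  obtain ⟨p₁, q₁, hp₁, hq₁, rfl⟩ := Int.exists_natCast_sub_eq_of_abs_lt ha
  obtain ⟨p₂, q₂, hp₂, hq₂, rfl⟩ := Int.exists_natCast_sub_eq_of_abs_lt hb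
  have mem : ∀ p q : ℕ, p < N → q < N →
      (2 * (p : ℂ) - w) + (2 * (q : ℂ) - w) * I ∈ squareGrid N w := fun p q hp hq =>
    mem_image.mpr ⟨(p, q), mem_product.mpr ⟨mem_range.mpr hp, mem_range.mpr hq⟩, rfl⟩
  have hdiff : 2 * (((p₁ : ℤ) - q₁ : ℤ) + ((p₂ : ℤ) - q₂ : ℤ) * I : ℂ) =
      ((2 * (p₁ : ℂ) - w) + (2 * (p₂ : ℂ) - w) * I) -
        ((2 * (q₁ : ℂ) - w) + (2 * (q₂ : ℂ) - w) * I) := by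
    push_cast
    ring
  rw [hdiff]
  exact sub_mem_sub (mem p₁ p₂ hp₁ hp₂) (mem q₁ q₂ hq₁ hq₂)

lemma one_le_norm_sub_of_min_le_norm {z c : ℂ} (hz : 1 ≤ ‖z‖)
    (h : min 2 (‖z‖ * 2) ≤ ‖-(2 * c) + z * 2‖) : 1 ≤ ‖z - c‖ := by
  have hmin : min 2 (‖z‖ * 2) = 2 := min_eq_left (by linarith)
  have hnorm : ‖-(2 * c) + z * 2‖ = 2 * ‖z - c‖ := by
    rw [show -(2 * c) + z * 2 = 2 * (z - c) by ring, norm_mul, RCLike.norm_two]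
  rw [hmin, hnorm] at h
  linarith

/-- For square `M`-QAM (`M = 2^(2λ)`, `d_min(S) = 2`), every `z` in the
clustering independent region `Γ_CI(S)` with `|z| > 1` lies in the exterior of each of
the `8(√M - 1)` unit circles centered at the points of
`C_M = {α + βi : α, β ∈ ℤ, |α| ≤ √M - 1, |β| ≤ √M - 1, max(|α|,|β|) = √M - 1}`. -/
theorem qam_exterior_clustering_independent_region (l : ℕ) (hl : 1 ≤ l)
    (S : Finset ℂ)
    (hS : S = ((Finset.range (2 ^ l)) ×ˢ (Finset.range (2 ^ l))).image
      (fun p : ℕ × ℕ =>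
        (2 * (p.1 : ℂ) - ((2 : ℂ) ^ l - 1)) + (2 * (p.2 : ℂ) - ((2 : ℂ) ^ l - 1)) * Complex.I))
    (ΔS : Finset ℂ)
    (hΔS : ΔS = (S ×ˢ S).image (fun p : ℂ × ℂ => p.1 - p.2))
    (Γ : Set ℂ)
    (hΓ : Γ = {z : ℂ | ∀ d ∈ ΔS, ∀ d' ∈ ΔS, ¬(d = 0 ∧ d' = 0) →
      min 2 (‖z‖ * 2) ≤ ‖d + z * d'‖})
    (C : Set ℂ)
    (hC : C = {c : ℂ | ∃ α β : ℤ, c = (α : ℂ) + (β : ℂ) * Complex.I ∧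
      |α| ≤ 2 ^ l - 1 ∧ |β| ≤ 2 ^ l - 1 ∧ max |α| |β| = 2 ^ l - 1}) :
    ∀ z ∈ Γ, 1 < ‖z‖ → ∀ c ∈ C, 1 ≤ ‖z - c‖ := by
  intro z hz hz₁ c hc
  subst hΓ hC
  obtain ⟨α, β, rfl, hα, hβ, -⟩ := hc
  have hΔS' : ΔS = squareGrid (2 ^ l) (2 ^ l - 1) - squareGrid (2 ^ l) (2 ^ l - 1) := by
    rw [hΔS, hS, Finset.sub_def]
    rfl
  have hmem : ∀ a b : ℤ, |a| < 2 ^ l → |b| < 2 ^ l → 2 * ((a : ℂ) + b * I) ∈ ΔS :=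
    fun a b ha hb =>
      hΔS' ▸ two_mul_mem_squareGrid_sub _ (by exact_mod_cast ha) (by exact_mod_cast hb)
  have hd : -(2 * ((α : ℂ) + β * I)) ∈ ΔS := by
    convert hmem (-α) (-β) (by rw [abs_neg]; linarith) (by rw [abs_neg]; linarith) using 1
    push_cast
    ring
  have hd' : (2 : ℂ) ∈ ΔS := by
    have h1 : (1 : ℤ) < 2 ^ l := one_lt_pow₀ one_lt_two (by omega)
    simpa using hmem 1 0 (by simpa using h1) (by simp)
  exact one_le_norm_sub_of_min_le_norm hz₁.le (hz _ hd _ hd' (by simp))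
end

section
/- Let M = 2^(2λ) with λ ≥ 2 (M > 4), let S be the square M-QAM signal set, Γ_CI(S) its clustering independent region, and C_M = {α + β·i : α, β ∈ ℤ, |α| ≤ √M - 1, |β| ≤ √M - 1, max(|α|, |β|) = √M - 1}. Then every z ∈ Γ_CI(S) with 0 < |z| ≤ 1 satisfies, for every c ∈ C_M, the inequality |z - conj(c)/(|c|² - 1)| ≥ 1/(|c|² - 1); that is, the interior clustering-independent region is contained in the intersection of the exteriors of the circles obtained by complex inversion (centers conj(c)/(|c|² - 1) and radii 1/(|c|² - 1)) of the unit circles centered at the points of C_M. -/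
/-!
Taking `d = 2` and `d' = -2c` in the defining condition of `Γ_CI(S)` (both are differences of
QAM points, since `|Re c|, |Im c| ≤ √M - 1`) gives `|z| ≤ |1 - z c|` whenever `|z| ≤ 1`, i.e.
`1/z` lies outside the open unit disc around `c`. Complex inversion maps that exterior onto the
exterior of the circle with center `conj c / (|c|² - 1)` and radius `1 / (|c|² - 1)`; concretely,
with `ρ = |c|² - 1`, one has `|ρ z - conj c|² - 1 = ρ (|1 - z c|² - |z|²)`.
-/

open Complex Finset

open scoped Pointwise ComplexConjugate

/-- The square QAM constellation with `n` points per side, `n = √M`. -/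
noncomputable def squareQAM (n : ℕ) : Finset ℂ :=
  (range n ×ˢ range n).image fun p : ℕ × ℕ =>
    (2 * (p.1 : ℂ) - ((n : ℂ) - 1)) + (2 * (p.2 : ℂ) - ((n : ℂ) - 1)) * I

lemma mem_squareQAM {n m k : ℕ} (hm : m < n) (hk : k < n) :
    (2 * (m : ℂ) - ((n : ℂ) - 1)) + (2 * (k : ℂ) - ((n : ℂ) - 1)) * I ∈ squareQAM n :=
  mem_image.2 ⟨(m, k), mem_product.2 ⟨mem_range.2 hm, mem_range.2 hk⟩, rfl⟩

lemma two_mul_add_two_mul_mul_I_mem_squareQAM_sub {n : ℕ} {a b : ℤ} (ha : |a| < n)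
    (hb : |b| < n) : 2 * (a : ℂ) + 2 * (b : ℂ) * I ∈ squareQAM n - squareQAM n := by
  rw [abs_lt] at ha hb
  have cast_toNat_sub (x : ℤ) : (x.toNat : ℂ) - ((-x).toNat : ℂ) = x := by
    exact_mod_cast congrArg (Int.cast : ℤ → ℂ) (Int.toNat_sub_toNat_neg x)
  have ha₁ : a.toNat < n := by omega
  have ha₂ : (-a).toNat < n := by omega
  have hb₁ : b.toNat < n := by omega
  have hb₂ : (-b).toNat < n := by omega
  refine mem_sub.2 ⟨_, mem_squareQAM ha₁ hb₁, _, mem_squareQAM ha₂ hb₂, ?_⟩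
  rw [← cast_toNat_sub a, ← cast_toNat_sub b]
  ring

lemma norm_le_norm_one_sub_mul_of_min_le {z c : ℂ} (hz : ‖z‖ ≤ 1)
    (h : min 2 (‖z‖ * 2) ≤ ‖2 + z * (-2 * c)‖) : ‖z‖ ≤ ‖1 - z * c‖ := by
  have factor : 2 + z * (-2 * c) = 2 * (1 - z * c) := by ring
  rw [min_eq_right (by linarith), factor, norm_mul, Complex.norm_two] at h
  linarith

lemma sq_norm_ofReal_mul_sub_conj_sub_one (z c : ℂ) :
    ‖((‖c‖ ^ 2 - 1 : ℝ) : ℂ) * z - conj c‖ ^ 2 - 1 =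
      (‖c‖ ^ 2 - 1) * (‖1 - z * c‖ ^ 2 - ‖z‖ ^ 2) := by
  simp only [Complex.sq_norm, normSq_apply, sub_re, sub_im, mul_re, mul_im, ofReal_re,
    ofReal_im, conj_re, conj_im, one_re, one_im]
  ring

/-- For `‖c‖ ≤ 1` the bound is trivial: its left-hand side is `≤ 0` (with `1 / 0 = 0`). -/
lemma one_div_le_norm_sub_conj_div_of_norm_le_norm_one_sub_mul {z c : ℂ}
    (h : ‖z‖ ≤ ‖1 - z * c‖) :
    1 / (‖c‖ ^ 2 - 1) ≤ ‖z - conj c / ((‖c‖ ^ 2 - 1 : ℝ) : ℂ)‖ := by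
  set ρ : ℝ := ‖c‖ ^ 2 - 1 with hρ_def
  rcases le_or_gt ρ 0 with hρ | hρ
  · exact (one_div_nonpos.2 hρ).trans (norm_nonneg _)
  have one_le : 1 ≤ ‖(ρ : ℂ) * z - conj c‖ := by
    have identity := sq_norm_ofReal_mul_sub_conj_sub_one z c
    rw [← hρ_def] at identity
    have sq_le := pow_le_pow_left₀ (norm_nonneg z) h 2
    have := mul_nonneg hρ.le (sub_nonneg.2 sq_le)
    exact le_of_pow_le_pow_left₀ two_ne_zero (norm_nonneg _) (by rw [one_pow]; linarith)
  have hρ0 : (ρ : ℂ) ≠ 0 := ofReal_ne_zero.2 hρ.ne'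
  have common_denom : z - conj c / (ρ : ℂ) = ((ρ : ℂ) * z - conj c) / (ρ : ℂ) := by
    field_simp
  rw [common_denom, norm_div, norm_real, Real.norm_of_nonneg hρ.le]
  gcongr

/-- For square `M`-QAM with `M = 2^(2λ) > 4`, every `z` in the
clustering independent region `Γ_CI(S)` with `0 < |z| ≤ 1` lies, for every `c ∈ C_M`,
in the exterior of the circle with center `conj(c)/(|c|² - 1)` and radius
`1/(|c|² - 1)` (the complex inversion of the unit circle centered at `c`). -/
theorem qam_interior_clustering_independent_region (l : ℕ) (hl : 2 ≤ l)
    (S : Finset ℂ)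
    (hS : S = ((Finset.range (2 ^ l)) ×ˢ (Finset.range (2 ^ l))).image
      (fun p : ℕ × ℕ =>
        (2 * (p.1 : ℂ) - ((2 : ℂ) ^ l - 1)) + (2 * (p.2 : ℂ) - ((2 : ℂ) ^ l - 1)) * Complex.I))
    (ΔS : Finset ℂ)
    (hΔS : ΔS = (S ×ˢ S).image (fun p : ℂ × ℂ => p.1 - p.2))
    (Γ : Set ℂ)
    (hΓ : Γ = {z : ℂ | ∀ d ∈ ΔS, ∀ d' ∈ ΔS, ¬(d = 0 ∧ d' = 0) →
      min 2 (‖z‖ * 2) ≤ ‖d + z * d'‖})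
    (C : Set ℂ)
    (hC : C = {c : ℂ | ∃ α β : ℤ, c = (α : ℂ) + (β : ℂ) * Complex.I ∧
      |α| ≤ 2 ^ l - 1 ∧ |β| ≤ 2 ^ l - 1 ∧ max |α| |β| = 2 ^ l - 1}) :
    ∀ z ∈ Γ, 0 < ‖z‖ → ‖z‖ ≤ 1 → ∀ c ∈ C,
      1 / (‖c‖ ^ 2 - 1) ≤
        ‖z - ((starRingEnd ℂ) c) / (((‖c‖ ^ 2 - 1 : ℝ)) : ℂ)‖ := by
  rintro z hz - hz1 c hc
  rw [hC] at hc
  obtain ⟨α, β, rfl, hα, hβ, -⟩ := hc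
  have hΔS' : ΔS = squareQAM (2 ^ l) - squareQAM (2 ^ l) := by
    rw [hΔS, hS, squareQAM]
    push_cast
    exact image_uncurry_product _ _ _
  have mem (a b : ℤ) (ha : |a| ≤ 2 ^ l - 1) (hb : |b| ≤ 2 ^ l - 1) :
      2 * (a : ℂ) + 2 * (b : ℂ) * I ∈ ΔS :=
    hΔS' ▸ two_mul_add_two_mul_mul_I_mem_squareQAM_sub (by push_cast; linarith)
      (by push_cast; linarith)
  have two_mem : (2 : ℂ) ∈ ΔS := by
    have : (2 : ℤ) ^ 2 ≤ 2 ^ l := pow_le_pow_right₀ (by norm_num) hl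
    simpa using mem 1 0 (by simp; linarith) (by simp; linarith)
  have neg_two_mul_mem : -2 * ((α : ℂ) + β * I) ∈ ΔS := by
    convert mem (-α) (-β) (by rwa [abs_neg]) (by rwa [abs_neg]) using 1
    push_cast
    ring
  rw [hΓ] at hz
  exact one_div_le_norm_sub_conj_div_of_norm_le_norm_one_sub_mul
    (norm_le_norm_one_sub_mul_of_min_le hz1 (hz 2 two_mem _ neg_two_mul_mem (by simp)))
end

section
/- Let S ⊆ ℂ be a finite set with at least two elements and let Γ_CI(S) be its clustering independent region. Then for every z ∈ ℂ with |z| > 1, one has z ∈ Γ_CI(S) if and only if 1/z ∈ Γ_CI(S); that is, the interior part of Γ_CI(S) is the image of the exterior part under complex inversion z ↦ 1/z. -/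
/-! Multiplying the defining inequality at `z⁻¹` by `‖z‖` turns it into
`min δ (‖z‖ * δ) ≤ ‖d' + z * d‖`, the defining inequality at `z` for the swapped pair `(d', d)`;
since the region quantifies over all pairs of differences, the two conditions agree. -/

def clusteringRegion (D : Set ℂ) (δ : ℝ) : Set ℂ :=
  {z | ∀ d ∈ D, ∀ d' ∈ D, ¬(d = 0 ∧ d' = 0) → min δ (‖z‖ * δ) ≤ ‖d + z * d'‖}

section Inversion

variable {z : ℂ}

theorem norm_mul_norm_add_inv_mul (hz : z ≠ 0) (d d' : ℂ) :
    ‖z‖ * ‖d + z⁻¹ * d'‖ = ‖d' + z * d‖ := by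
  rw [← norm_mul]
  congr 1
  field_simp
  ring

theorem norm_mul_min_norm_inv_mul (hz : z ≠ 0) (δ : ℝ) :
    ‖z‖ * min δ (‖z⁻¹‖ * δ) = min δ (‖z‖ * δ) := by
  rw [mul_min_of_nonneg _ _ (norm_nonneg z), norm_inv,
    mul_inv_cancel_left₀ (norm_ne_zero_iff.2 hz), min_comm]

theorem min_le_norm_add_inv_mul_iff (hz : z ≠ 0) (δ : ℝ) (d d' : ℂ) :
    min δ (‖z⁻¹‖ * δ) ≤ ‖d + z⁻¹ * d'‖ ↔ min δ (‖z‖ * δ) ≤ ‖d' + z * d‖ := by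
  rw [← norm_mul_min_norm_inv_mul hz, ← norm_mul_norm_add_inv_mul hz,
    mul_le_mul_iff_right₀ (norm_pos_iff.2 hz)]

theorem inv_mem_clusteringRegion_iff (hz : z ≠ 0) (D : Set ℂ) (δ : ℝ) :
    z⁻¹ ∈ clusteringRegion D δ ↔ z ∈ clusteringRegion D δ := by
  simp only [clusteringRegion, Set.mem_ofPred_eq, min_le_norm_add_inv_mul_iff hz]
  constructor
  · intro h d hd d' hd' hne
    exact h d' hd' d hd (by tauto)
  · intro h d hd d' hd' hne
    exact h d' hd' d hd (by tauto)

end Inversion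

theorem clustering_independent_region_inversion_general
    (ΔS : Finset ℂ)
    (dminS : ℝ)
    (Γ : Set ℂ)
    (hΓ : Γ = {z : ℂ | ∀ d ∈ ΔS, ∀ d' ∈ ΔS, ¬(d = 0 ∧ d' = 0) →
      min dminS (‖z‖ * dminS) ≤ ‖d + z * d'‖})
    (z : ℂ) (hz : 1 < ‖z‖) :
    z ∈ Γ ↔ 1 / z ∈ Γ := by
  have hz0 : z ≠ 0 := norm_pos_iff.1 (zero_lt_one.trans hz)
  subst hΓ
  exact (one_div z ▸ inv_mem_clusteringRegion_iff hz0 ΔS dminS).symm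

/-- For a finite `S ⊆ ℂ` with at least two elements and any `z ∈ ℂ`
with `|z| > 1`, `z` belongs to the clustering independent region `Γ_CI(S)` if and
only if `1/z` does: the interior part of `Γ_CI(S)` is the image of the exterior part
under complex inversion. -/
theorem clustering_independent_region_inversion (S : Finset ℂ) (hS : 2 ≤ S.card)
    (ΔS : Finset ℂ)
    (hΔS : ΔS = (S ×ˢ S).image (fun p : ℂ × ℂ => p.1 - p.2))
    (dminS : ℝ)
    (hdminS : dminS = sInf {r : ℝ | ∃ x ∈ S, ∃ x' ∈ S, x ≠ x' ∧ r = ‖x - x'‖})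
    (Γ : Set ℂ)
    (hΓ : Γ = {z : ℂ | ∀ d ∈ ΔS, ∀ d' ∈ ΔS, ¬(d = 0 ∧ d' = 0) →
      min dminS (‖z‖ * dminS) ≤ ‖d + z * d'‖})
    (z : ℂ) (hz : 1 < ‖z‖) :
    z ∈ Γ ↔ 1 / z ∈ Γ :=
  clustering_independent_region_inversion_general ΔS dminS Γ hΓ z hz
end

section
/- Let M = 2^(2λ) with λ ≥ 1 and let S be the square M-QAM signal set. Then every z ∈ ℂ with max(|Re z|, |Im z|) ≥ √M belongs to the clustering independent region Γ_CI(S). -/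
/-!
Write each difference of QAM points as `2 α` with `α` a Gaussian integer whose coordinates are
at most `√M - 1` in absolute value; it then suffices that `‖α + z β‖ ≥ 1` for Gaussian integers
`α, β` not both zero. For `β = 0` this is `‖α‖ ≥ 1`. Otherwise, if `w = α + z β` had `‖w‖ < 1`,
then `z ‖β‖² = (w - α) β̄`, and bounding the sup norm of a product by the sup norm of one factor
times the `ℓ¹` norm of the other gives `‖z‖_∞ ‖β‖² < √M (|Re β| + |Im β|) ≤ √M ‖β‖²`, the last
step because `|c| ≤ c²` for every integer `c`.
-/

open Complex ComplexConjugate GaussianInt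

lemma max_abs_re_im_mul_conj_le (u v : ℂ) :
    max |(u * conj v).re| |(u * conj v).im| ≤ max |u.re| |u.im| * (|v.re| + |v.im|) := by
  have hre : |u.re| ≤ max |u.re| |u.im| := le_max_left _ _
  have him : |u.im| ≤ max |u.re| |u.im| := le_max_right _ _
  simp only [mul_re, mul_im, conj_re, conj_im]
  refine max_le ?_ ?_
  · calc |u.re * v.re - u.im * -v.im| ≤ |u.re| * |v.re| + |u.im| * |v.im| := by
          simpa [abs_mul] using abs_add_le (u.re * v.re) (u.im * v.im)
      _ ≤ _ := by nlinarith [abs_nonneg v.re, abs_nonneg v.im]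
  · calc |u.re * -v.im + u.im * v.re| ≤ |u.re| * |v.im| + |u.im| * |v.re| := by
          simpa [abs_mul] using abs_add_le (u.re * -v.im) (u.im * v.re)
      _ ≤ _ := by nlinarith [abs_nonneg v.re, abs_nonneg v.im]

lemma max_abs_re_im_mul_ofReal (z : ℂ) {r : ℝ} (hr : 0 ≤ r) :
    max |(z * r).re| |(z * r).im| = max |z.re| |z.im| * r := by
  simp [abs_mul, abs_of_nonneg hr, max_mul_of_nonneg _ _ hr]

namespace GaussianInt

lemma abs_re_add_abs_im_le_norm (x : GaussianInt) : |x.re| + |x.im| ≤ x.norm := by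
  have hre : |x.re| ≤ x.re ^ 2 := by simpa using Int.natAbs_le_self_sq x.re
  have him : |x.im| ≤ x.im ^ 2 := by simpa using Int.natAbs_le_self_sq x.im
  rw [Zsqrtd.norm_def]
  linarith

lemma one_le_abs_re_add_abs_im {x : GaussianInt} (hx : x ≠ 0) : 1 ≤ |x.re| + |x.im| := by
  by_cases hre : x.re = 0
  · have him : x.im ≠ 0 := fun him => hx (Zsqrtd.ext hre him)
    linarith [Int.one_le_abs him, abs_nonneg x.re]
  · linarith [Int.one_le_abs hre, abs_nonneg x.im]

lemma one_le_norm_toComplex {x : GaussianInt} (hx : x ≠ 0) : 1 ≤ ‖(x : ℂ)‖ := by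
  have h : (1 : ℝ) ≤ ‖(x : ℂ)‖ ^ 2 := by
    rw [← normSq_eq_norm_sq, ← intCast_real_norm]
    exact_mod_cast norm_pos.mpr hx
  nlinarith [_root_.norm_nonneg (x : ℂ)]

end GaussianInt

lemma max_abs_re_im_lt_of_norm_add_mul_lt {α z : ℂ} {β : GaussianInt} {N : ℝ}
    (hα : max |α.re| |α.im| ≤ N - 1) (hβ : β ≠ 0) (h : ‖α + z * β‖ < 1) :
    max |z.re| |z.im| < N := by
  set w := α + z * β
  have hN : 0 ≤ N := by linarith [le_max_left |α.re| |α.im|, abs_nonneg α.re]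
  have hβ_re : ((β.re : ℤ) : ℝ) = (β : ℂ).re := intCast_re β
  have hβ_im : ((β.im : ℤ) : ℝ) = (β : ℂ).im := intCast_im β
  have hl1_pos : 0 < |(β : ℂ).re| + |(β : ℂ).im| := by
    rw [← hβ_re, ← hβ_im]
    exact_mod_cast (one_le_abs_re_add_abs_im hβ).trans_lt' zero_lt_one
  have hl1_le : |(β : ℂ).re| + |(β : ℂ).im| ≤ normSq β := by
    rw [← hβ_re, ← hβ_im, ← intCast_real_norm]
    exact_mod_cast abs_re_add_abs_im_le_norm β
  have hw : max |(w - α).re| |(w - α).im| < N := by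
    have hre := (abs_re_le_norm w).trans_lt h
    have him := (abs_im_le_norm w).trans_lt h
    refine max_lt ?_ ?_
    · rw [sub_re]; linarith [abs_sub w.re α.re, le_max_left |α.re| |α.im|]
    · rw [sub_im]; linarith [abs_sub w.im α.im, le_max_right |α.re| |α.im|]
  -- Multiplying `z * β = w - α` by `conj β` isolates `z` up to the positive factor `normSq β`.
  have hz : z * (normSq β : ℂ) = (w - α) * conj (β : ℂ) := by
    rw [← mul_conj]; ring
  refine lt_of_mul_lt_mul_right ?_ (normSq_nonneg (β : ℂ))
  calc max |z.re| |z.im| * normSq β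
      = max |(z * (normSq β : ℂ)).re| |(z * (normSq β : ℂ)).im| :=
        (max_abs_re_im_mul_ofReal z (normSq_nonneg _)).symm
    _ ≤ max |(w - α).re| |(w - α).im| * (|(β : ℂ).re| + |(β : ℂ).im|) := by
        rw [hz]; exact max_abs_re_im_mul_conj_le _ _
    _ < N * (|(β : ℂ).re| + |(β : ℂ).im|) := mul_lt_mul_of_pos_right hw hl1_pos
    _ ≤ N * normSq β := mul_le_mul_of_nonneg_left hl1_le hN

lemma one_le_norm_add_mul {α β : GaussianInt} {z : ℂ} {N : ℝ}
    (hα : max |(α : ℂ).re| |(α : ℂ).im| ≤ N - 1) (hαβ : ¬(α = 0 ∧ β = 0))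
    (hz : N ≤ max |z.re| |z.im|) : 1 ≤ ‖(α : ℂ) + z * β‖ := by
  by_cases hβ : β = 0
  · simpa [hβ] using one_le_norm_toComplex fun hα0 => hαβ ⟨hα0, hβ⟩
  · by_contra! h
    exact (max_abs_re_im_lt_of_norm_add_mul_lt hα hβ h).not_ge hz

lemma exists_gaussianInt_of_mem_qam_sub (K : ℕ) (m : ℂ) {d : ℂ}
    (hd : d ∈ (((Finset.range K ×ˢ Finset.range K).image fun p : ℕ × ℕ =>
      (2 * (p.1 : ℂ) - m) + (2 * (p.2 : ℂ) - m) * I) ×ˢ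
      ((Finset.range K ×ˢ Finset.range K).image fun p : ℕ × ℕ =>
      (2 * (p.1 : ℂ) - m) + (2 * (p.2 : ℂ) - m) * I)).image fun p : ℂ × ℂ => p.1 - p.2) :
    ∃ x : GaussianInt, max |(x : ℂ).re| |(x : ℂ).im| ≤ K - 1 ∧ d = 2 * x := by
  simp only [Finset.mem_image, Finset.mem_product, Finset.mem_range, Prod.exists] at hd
  obtain ⟨_, _, ⟨⟨p, q, ⟨hp, hq⟩, rfl⟩, ⟨p', q', ⟨hp', hq'⟩, rfl⟩⟩, rfl⟩ := hd
  have coord_le {a b : ℕ} (ha : a < K) (hb : b < K) : |(((a : ℤ) - b : ℤ) : ℝ)| ≤ K - 1 := by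
    have ha' : (a : ℝ) + 1 ≤ K := by exact_mod_cast ha
    have hb' : (b : ℝ) + 1 ≤ K := by exact_mod_cast hb
    push_cast
    rw [abs_le]
    constructor <;> linarith [a.cast_nonneg (α := ℝ), b.cast_nonneg (α := ℝ)]
  refine ⟨⟨(p : ℤ) - p', (q : ℤ) - q'⟩, ?_, ?_⟩
  · rw [re_toComplex, im_toComplex]
    exact max_le (coord_le hp hp') (coord_le hq hq')
  · rw [toComplex_def']; push_cast; ring

theorem qam_infty_norm_ge_sqrtM_clustering_independent_general (l : ℕ)
    (S : Finset ℂ)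
    (hS : S = ((Finset.range (2 ^ l)) ×ˢ (Finset.range (2 ^ l))).image
      (fun p : ℕ × ℕ =>
        (2 * (p.1 : ℂ) - ((2 : ℂ) ^ l - 1)) + (2 * (p.2 : ℂ) - ((2 : ℂ) ^ l - 1)) * Complex.I))
    (ΔS : Finset ℂ)
    (hΔS : ΔS = (S ×ˢ S).image (fun p : ℂ × ℂ => p.1 - p.2))
    (Γ : Set ℂ)
    (hΓ : Γ = {z : ℂ | ∀ d ∈ ΔS, ∀ d' ∈ ΔS, ¬(d = 0 ∧ d' = 0) →
      min 2 (‖z‖ * 2) ≤ ‖d + z * d'‖}) :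
    ∀ z : ℂ, (2 : ℝ) ^ l ≤ max |z.re| |z.im| → z ∈ Γ := by
  subst hS hΔS hΓ
  intro z hz d hd d' hd' hne
  obtain ⟨α, hα, rfl⟩ := exists_gaussianInt_of_mem_qam_sub _ _ hd
  obtain ⟨β, -, rfl⟩ := exists_gaussianInt_of_mem_qam_sub _ _ hd'
  have hαβ : ¬(α = 0 ∧ β = 0) := by simpa using hne
  push_cast at hα
  calc min 2 (‖z‖ * 2) ≤ 2 := min_le_left _ _
    _ ≤ 2 * ‖(α : ℂ) + z * β‖ := by linarith [one_le_norm_add_mul hα hαβ hz]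
    _ = ‖2 * ((α : ℂ) + z * β)‖ := by rw [norm_mul, Complex.norm_two]
    _ = ‖2 * (α : ℂ) + z * (2 * β)‖ := by ring_nf

/-- For square `M`-QAM (`M = 2^(2λ)`, `d_min(S) = 2`), every `z ∈ ℂ`
with `max(|Re z|, |Im z|) ≥ √M` belongs to the clustering independent region
`Γ_CI(S)`. -/
theorem qam_infty_norm_ge_sqrtM_clustering_independent (l : ℕ) (hl : 1 ≤ l)
    (S : Finset ℂ)
    (hS : S = ((Finset.range (2 ^ l)) ×ˢ (Finset.range (2 ^ l))).image
      (fun p : ℕ × ℕ =>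
        (2 * (p.1 : ℂ) - ((2 : ℂ) ^ l - 1)) + (2 * (p.2 : ℂ) - ((2 : ℂ) ^ l - 1)) * Complex.I))
    (ΔS : Finset ℂ)
    (hΔS : ΔS = (S ×ˢ S).image (fun p : ℂ × ℂ => p.1 - p.2))
    (Γ : Set ℂ)
    (hΓ : Γ = {z : ℂ | ∀ d ∈ ΔS, ∀ d' ∈ ΔS, ¬(d = 0 ∧ d' = 0) →
      min 2 (‖z‖ * 2) ≤ ‖d + z * d'‖}) :
    ∀ z : ℂ, (2 : ℝ) ^ l ≤ max |z.re| |z.im| → z ∈ Γ :=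
  qam_infty_norm_ge_sqrtM_clustering_independent_general l S hS ΔS hΔS Γ hΓ
end

section
/- Let M = 2^(2λ) with λ ≥ 1 and let S be the square M-QAM signal set. Then every z ∈ ℂ with |z| ≤ 1/(√(2M) + 1 - √2) belongs to the clustering independent region Γ_CI(S). -/
/-!
Every element of the difference constellation has the form `2 (a + b i)` with integers
`|a|, |b| ≤ 2 ^ l - 1`, so its nonzero elements satisfy `2 ≤ |d| ≤ 2 √2 (2 ^ l - 1)`.
For `d = 0` this gives `|z d'| ≥ 2 |z|` directly; for `d ≠ 0` the reverse triangle inequality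
gives `|d + z d'| ≥ 2 - 2 √2 (2 ^ l - 1) |z|`, which is at least `2 |z|` exactly when
`|z| (√2 · 2 ^ l + 1 - √2) ≤ 1`.
-/

open Complex

theorem min_le_norm_add_mul_of_norm_le {𝕜 : Type*} [NormedDivisionRing 𝕜] {A : Set 𝕜}
    {δ R : ℝ} (hsep : ∀ d ∈ A, d ≠ 0 → δ ≤ ‖d‖) (hbdd : ∀ d ∈ A, ‖d‖ ≤ R) {z : 𝕜}
    (hz : ‖z‖ * (R + δ) ≤ δ) {d d' : 𝕜} (hd : d ∈ A) (hd' : d' ∈ A)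
    (hne : ¬(d = 0 ∧ d' = 0)) :
    min δ (‖z‖ * δ) ≤ ‖d + z * d'‖ := by
  by_cases hd0 : d = 0
  · subst hd0
    calc min δ (‖z‖ * δ) ≤ ‖z‖ * δ := min_le_right _ _
      _ ≤ ‖z‖ * ‖d'‖ := by gcongr; exact hsep d' hd' fun h => hne ⟨rfl, h⟩
      _ = ‖0 + z * d'‖ := by rw [zero_add, norm_mul]
  · calc min δ (‖z‖ * δ) ≤ ‖z‖ * δ := min_le_right _ _
      _ ≤ δ - ‖z‖ * R := by linarith
      _ ≤ ‖d‖ - ‖z‖ * ‖d'‖ := by gcongr; exacts [hsep d hd hd0, hbdd d' hd']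
      _ ≤ ‖d + z * d'‖ := by simpa only [norm_mul] using norm_sub_le_norm_add d (z * d')

theorem one_le_norm_intCast_add_intCast_mul_I {a b : ℤ} (h : a ≠ 0 ∨ b ≠ 0) :
    1 ≤ ‖(a : ℂ) + b * I‖ := by
  rcases h with ha | hb
  · calc (1 : ℝ) ≤ |(a : ℝ)| := by exact_mod_cast Int.one_le_abs ha
      _ ≤ ‖(a : ℂ) + b * I‖ := by simpa using abs_re_le_norm ((a : ℂ) + b * I)
  · calc (1 : ℝ) ≤ |(b : ℝ)| := by exact_mod_cast Int.one_le_abs hb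
      _ ≤ ‖(a : ℂ) + b * I‖ := by simpa using abs_im_le_norm ((a : ℂ) + b * I)

theorem norm_ofReal_add_ofReal_mul_I_le {x y m : ℝ} (hx : |x| ≤ m) (hy : |y| ≤ m) :
    ‖(x : ℂ) + y * I‖ ≤ √2 * m := by
  calc ‖(x : ℂ) + y * I‖ ≤ √2 * max |x| |y| := by
        simpa using norm_le_sqrt_two_mul_max ((x : ℂ) + y * I)
    _ ≤ √2 * m := by gcongr; exact max_le hx hy

noncomputable def qam (l : ℕ) : Finset ℂ :=
  ((Finset.range (2 ^ l)) ×ˢ (Finset.range (2 ^ l))).image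
      (fun p : ℕ × ℕ =>
        (2 * (p.1 : ℂ) - ((2 : ℂ) ^ l - 1)) + (2 * (p.2 : ℂ) - ((2 : ℂ) ^ l - 1)) * I)

noncomputable def qamDiff (l : ℕ) : Finset ℂ :=
  (qam l ×ˢ qam l).image fun p : ℂ × ℂ => p.1 - p.2

theorem abs_natCast_sub_natCast_lt {p q n : ℕ} (hp : p < n) (hq : q < n) :
    |(p : ℤ) - q| < n := by
  rw [abs_lt]; omega

theorem exists_int_of_mem_qamDiff {l : ℕ} {d : ℂ} (hd : d ∈ qamDiff l) :
    ∃ a b : ℤ, d = 2 * ((a : ℂ) + b * I) ∧ |a| < 2 ^ l ∧ |b| < 2 ^ l := by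
  simp only [qamDiff, qam, Finset.mem_image, Finset.mem_product, Finset.mem_range,
    Prod.exists] at hd
  obtain ⟨-, -, ⟨⟨p, q, ⟨hp, hq⟩, rfl⟩, ⟨p', q', ⟨hp', hq'⟩, rfl⟩⟩, rfl⟩ := hd
  refine ⟨(p : ℤ) - p', (q : ℤ) - q', by push_cast; ring, ?_, ?_⟩
  · exact_mod_cast abs_natCast_sub_natCast_lt hp hp'
  · exact_mod_cast abs_natCast_sub_natCast_lt hq hq'

theorem two_le_norm_of_mem_qamDiff {l : ℕ} {d : ℂ} (hd : d ∈ qamDiff l) (hd0 : d ≠ 0) :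
    2 ≤ ‖d‖ := by
  obtain ⟨a, b, rfl, -, -⟩ := exists_int_of_mem_qamDiff hd
  have hab : a ≠ 0 ∨ b ≠ 0 := by
    by_contra! h
    simp [h] at hd0
  simpa [norm_mul] using one_le_norm_intCast_add_intCast_mul_I hab

theorem norm_le_of_mem_qamDiff {l : ℕ} {d : ℂ} (hd : d ∈ qamDiff l) :
    ‖d‖ ≤ 2 * (√2 * (2 ^ l - 1)) := by
  obtain ⟨a, b, rfl, ha, hb⟩ := exists_int_of_mem_qamDiff hd
  have cast_le {c : ℤ} (hc : |c| < 2 ^ l) : |(c : ℝ)| ≤ 2 ^ l - 1 := by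
    exact_mod_cast Int.le_sub_one_of_lt hc
  rw [norm_mul, Complex.norm_two]
  gcongr
  simpa using norm_ofReal_add_ofReal_mul_I_le (cast_le ha) (cast_le hb)

theorem sqrt_two_mul_two_pow_two_mul (l : ℕ) : √(2 * 2 ^ (2 * l)) = √2 * 2 ^ l := by
  rw [Real.sqrt_mul zero_le_two, pow_mul', Real.sqrt_sq (by positivity)]

theorem qam_small_abs_clustering_independent_general (l : ℕ)
    (S : Finset ℂ)
    (hS : S = ((Finset.range (2 ^ l)) ×ˢ (Finset.range (2 ^ l))).image
      (fun p : ℕ × ℕ =>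
        (2 * (p.1 : ℂ) - ((2 : ℂ) ^ l - 1)) + (2 * (p.2 : ℂ) - ((2 : ℂ) ^ l - 1)) * Complex.I))
    (ΔS : Finset ℂ)
    (hΔS : ΔS = (S ×ˢ S).image (fun p : ℂ × ℂ => p.1 - p.2))
    (Γ : Set ℂ)
    (hΓ : Γ = {z : ℂ | ∀ d ∈ ΔS, ∀ d' ∈ ΔS, ¬(d = 0 ∧ d' = 0) →
      min 2 (‖z‖ * 2) ≤ ‖d + z * d'‖}) :
    ∀ z : ℂ,
      ‖z‖ ≤ 1 / (Real.sqrt (2 * 2 ^ (2 * l)) + 1 - Real.sqrt 2) → z ∈ Γ := by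
  intro z hz
  subst hS hΔS hΓ
  intro d hd d' hd' hne
  have hden : 0 < √2 * 2 ^ l + 1 - √2 := by
    nlinarith [one_le_pow₀ (M₀ := ℝ) one_le_two (n := l), Real.sqrt_nonneg 2]
  rw [sqrt_two_mul_two_pow_two_mul, le_div_iff₀ hden] at hz
  exact min_le_norm_add_mul_of_norm_le (A := qamDiff l)
    (fun _ ↦ two_le_norm_of_mem_qamDiff) (fun _ ↦ norm_le_of_mem_qamDiff) (by linarith) hd hd' hne

/-- For square `M`-QAM (`M = 2^(2λ)`, `d_min(S) = 2`), every `z ∈ ℂ`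
with `|z| ≤ 1/(√(2M) + 1 - √2)` belongs to the clustering independent region
`Γ_CI(S)`. -/
theorem qam_small_abs_clustering_independent (l : ℕ) (hl : 1 ≤ l)
    (S : Finset ℂ)
    (hS : S = ((Finset.range (2 ^ l)) ×ˢ (Finset.range (2 ^ l))).image
      (fun p : ℕ × ℕ =>
        (2 * (p.1 : ℂ) - ((2 : ℂ) ^ l - 1)) + (2 * (p.2 : ℂ) - ((2 : ℂ) ^ l - 1)) * Complex.I))
    (ΔS : Finset ℂ)
    (hΔS : ΔS = (S ×ˢ S).image (fun p : ℂ × ℂ => p.1 - p.2))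
    (Γ : Set ℂ)
    (hΓ : Γ = {z : ℂ | ∀ d ∈ ΔS, ∀ d' ∈ ΔS, ¬(d = 0 ∧ d' = 0) →
      min 2 (‖z‖ * 2) ≤ ‖d + z * d'‖}) :
    ∀ z : ℂ,
      ‖z‖ ≤ 1 / (Real.sqrt (2 * 2 ^ (2 * l)) + 1 - Real.sqrt 2) → z ∈ Γ :=
  qam_small_abs_clustering_independent_general l S hS ΔS hΔS Γ hΓ
end

section
/- Let S ⊆ ℂ be a finite set with at least two elements, let z ∈ ℂ with z ≠ 0, and let q : S × S → (S × S)/~ be the quotient map of the equivalence relation (x_A, x_B) ~ (x_A', x_B') ⟺ (x_A - x_A') + z·(x_B - x_B') = 0. Then for every w ∈ ℂ, the minimum cluster distance of q at w equals min{|d_k + w·d_l| : (d_k, d_l) ∈ ΔS × ΔS, d_k + z·d_l ≠ 0}, where ΔS = {x - x' : x, x' ∈ S} is the difference constellation. Consequently, among the clusterings {q_z : z ∈ H} indexed by a finite set H of singular fade states, a clustering q_{z'} maximizes the minimum cluster distance at w if and only if z' maximizes min{|d_k + w·d_l| : (d_k,d_l) ∈ ΔS × ΔS, d_k + z·d_l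 ≠ 0} over z ∈ H. -/
/-- The equivalence relation on `ℂ × ℂ` associated with the singular fade state `ζ`:
`(x_A, x_B) ~ (x_A', x_B') ↔ (x_A - x_A') + ζ·(x_B - x_B') = 0`. -/
def fadeRel (ζ : ℂ) : (ℂ × ℂ) → (ℂ × ℂ) → Prop :=
  fun p q => (p.1 - q.1) + ζ * (p.2 - q.2) = 0

/-- The minimum cluster distance at `w` of the clustering `q_ζ` removing the singular
fade state `ζ` (the quotient map of `fadeRel ζ`), for the signal set `S`. -/
noncomputable def minClusterDist (S : Finset ℂ) (ζ w : ℂ) : ℝ :=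
  sInf {t : ℝ | ∃ xA ∈ S, ∃ xB ∈ S, ∃ xA' ∈ S, ∃ xB' ∈ S,
    Quot.mk (fadeRel ζ) (xA, xB) ≠ Quot.mk (fadeRel ζ) (xA', xB') ∧
    t = ‖(xA - xA') + w * (xB - xB')‖}

/-- `min{|d_k + w·d_l| : (d_k, d_l) ∈ ΔS × ΔS, d_k + ζ·d_l ≠ 0}` where
`ΔS = {x - x' : x, x' ∈ S}` is the difference constellation of `S`. -/
noncomputable def diffMinDist (S : Finset ℂ) (ζ w : ℂ) : ℝ :=
  sInf {t : ℝ | ∃ dk ∈ (S ×ˢ S).image (fun p : ℂ × ℂ => p.1 - p.2),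
    ∃ dl ∈ (S ×ˢ S).image (fun p : ℂ × ℂ => p.1 - p.2),
    dk + ζ * dl ≠ 0 ∧ t = ‖dk + w * dl‖}

/-! Two signal pairs lie in different clusters of `q_ζ` exactly when their difference
`(d_k, d_l) ∈ ΔS × ΔS` satisfies `d_k + ζ·d_l ≠ 0`, so both minima are taken over the same
set of distances `|d_k + w·d_l|`. -/

lemma fadeRel_equivalence (ζ : ℂ) : Equivalence (fadeRel ζ) where
  refl _ := by simp [fadeRel]
  symm h := by unfold fadeRel at *; linear_combination -h
  trans h₁ h₂ := by unfold fadeRel at *; linear_combination h₁ + h₂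

lemma quot_mk_fadeRel_eq_iff (ζ : ℂ) (p q : ℂ × ℂ) :
    Quot.mk (fadeRel ζ) p = Quot.mk (fadeRel ζ) q ↔ fadeRel ζ p q :=
  Quot.eq.trans (fadeRel_equivalence ζ).eqvGen_iff

lemma minClusterDist_eq_diffMinDist (S : Finset ℂ) (ζ w : ℂ) :
    minClusterDist S ζ w = diffMinDist S ζ w := by
  unfold minClusterDist diffMinDist
  congr 1
  ext t
  simp only [ne_eq, quot_mk_fadeRel_eq_iff, fadeRel]
  constructor
  · rintro ⟨xA, hA, xB, hB, xA', hA', xB', hB', hne, rfl⟩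
    exact ⟨xA - xA', Finset.mem_image_of_mem _ (Finset.mk_mem_product hA hA'),
      xB - xB', Finset.mem_image_of_mem _ (Finset.mk_mem_product hB hB'), hne, rfl⟩
  · rintro ⟨dk, hdk, dl, hdl, hne, rfl⟩
    obtain ⟨⟨xA, xA'⟩, hA, rfl⟩ := Finset.mem_image.1 hdk
    obtain ⟨⟨xB, xB'⟩, hB, rfl⟩ := Finset.mem_image.1 hdl
    rw [Finset.mem_product] at hA hB
    exact ⟨xA, hA.1, xB, hB.1, xA', hA.2, xB', hB.2, hne, rfl⟩

theorem min_cluster_distance_of_quotient_clustering_general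
    (S : Finset ℂ) (z : ℂ) (w : ℂ) :
    minClusterDist S z w = diffMinDist S z w ∧
    ∀ (H : Finset ℂ), (∀ ζ ∈ H, ζ ≠ 0) → ∀ z' ∈ H,
      ((∀ ζ ∈ H, minClusterDist S ζ w ≤ minClusterDist S z' w) ↔
       (∀ ζ ∈ H, diffMinDist S ζ w ≤ diffMinDist S z' w)) := by
  refine ⟨minClusterDist_eq_diffMinDist S z w, fun H _ z' _ => ?_⟩
  simp only [minClusterDist_eq_diffMinDist]

/-- For a finite `S ⊆ ℂ` with at least two elements and `z ≠ 0`, the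
minimum cluster distance at any `w` of the quotient clustering `q_z` equals
`min{|d_k + w·d_l| : (d_k,d_l) ∈ ΔS × ΔS, d_k + z·d_l ≠ 0}`. Consequently, among the
clusterings `{q_ζ : ζ ∈ H}` indexed by a finite set `H` of (nonzero) singular fade
states, `q_{z'}` maximizes the minimum cluster distance at `w` iff `z'` maximizes
`min{|d_k + w·d_l| : d_k + ζ·d_l ≠ 0}` over `ζ ∈ H`. -/
theorem min_cluster_distance_of_quotient_clustering
    (S : Finset ℂ) (hS : 2 ≤ S.card) (z : ℂ) (hz : z ≠ 0) (w : ℂ) :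
    minClusterDist S z w = diffMinDist S z w ∧
    ∀ (H : Finset ℂ), (∀ ζ ∈ H, ζ ≠ 0) → ∀ z' ∈ H,
      ((∀ ζ ∈ H, minClusterDist S ζ w ≤ minClusterDist S z' w) ↔
       (∀ ζ ∈ H, diffMinDist S ζ w ≤ diffMinDist S z' w)) :=
  min_cluster_distance_of_quotient_clustering_general S z w
end
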